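/- arXiv:1511.08191 — 5 statements merged into one kernel-verified Lean document; each statement's English description precedes it below -/
import Mathlib

section
/- For a finite Borel regular measure μ on a compact metric space X and any point x ∈ X, the lower local dimension of μ at x equals the infimum of all s ≥ 0 such that the s-potential φ_s(x) = ∫ d(x,y)^{-s} dμ(y) is infinite, which also equals the supremum of all s ≥ 0 such that φ_s(x) is finite. -/
/-!
If `μ (closedBall x r) ≤ r ^ t` for small `r`, cutting `X` into the dyadic shells
`r₀ 2⁻⁽ⁿ⁺¹⁾ < d(x, y) ≤ r₀ 2⁻ⁿ` bounds `φ_s(x)` by a geometric series of ratio `2^(s - t)`, so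
`φ_s(x) < ∞` for `s < t`. Conversely `φ_s(x) ≥ r^(-s) μ (closedBall x r)`, so if
`μ (closedBall x r) ≥ r ^ t` for arbitrarily small `r` then `φ_s(x) = ∞` for `s > t`.
Since `log μ(B(x, r)) / log r ≥ t` is exactly `μ(B(x, r)) ≤ r ^ t` for `r < 1`, the potential
jumps from finite to infinite at the lower local dimension.
-/

open MeasureTheory Filter Metric Set Topology
open scoped ENNReal

/-- The lower local dimension of a measure at a point. -/
noncomputable def lowerLocalDim {X : Type*} [MetricSpace X] [MeasurableSpace X]
    (μ : Measure X) (x : X) : ℝ :=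
  liminf (fun r : ℝ => Real.log (μ (closedBall x r)).toReal / Real.log r) (𝓝[>] 0)

/-- The `s`-potential of `μ` at `x`. -/
noncomputable def potential {X : Type*} [MetricSpace X] [MeasurableSpace X]
    (μ : Measure X) (s : ℝ) (x : X) : ℝ≥0∞ :=
  ∫⁻ y, edist x y ^ (-s) ∂μ

theorem ENNReal.rpow_le_rpow_of_nonpos {x y : ℝ≥0∞} {z : ℝ} (hxy : x ≤ y) (hz : z ≤ 0) :
    y ^ z ≤ x ^ z := by
  have h := ENNReal.inv_le_inv.2 (ENNReal.rpow_le_rpow hxy (neg_nonneg.2 hz))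
  rwa [← ENNReal.rpow_neg, ← ENNReal.rpow_neg, neg_neg] at h

theorem Real.le_log_div_log_iff {a r t : ℝ} (ha : 0 < a) (hr₀ : 0 < r) (hr₁ : r < 1) :
    t ≤ Real.log a / Real.log r ↔ a ≤ r ^ t := by
  rw [le_div_iff_of_neg (Real.log_neg hr₀ hr₁), ← Real.log_rpow hr₀,
    Real.log_le_log_iff ha (Real.rpow_pos_of_pos hr₀ t)]

theorem Real.dyadic_rpow_mul_rpow {r₀ : ℝ} (hr₀ : 0 < r₀) (s t : ℝ) (n : ℕ) :
    (r₀ * 2⁻¹ ^ (n + 1)) ^ (-s) * (r₀ * 2⁻¹ ^ n) ^ t =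
      2 ^ s * r₀ ^ (t - s) * ((2⁻¹ : ℝ) ^ (t - s)) ^ n := by
  have ha : 0 < r₀ * 2⁻¹ ^ n := by positivity
  have h2 : (2⁻¹ : ℝ) ^ (-s) = 2 ^ s := by
    rw [Real.inv_rpow zero_le_two, Real.rpow_neg zero_le_two, inv_inv]
  rw [pow_succ, ← mul_assoc, Real.mul_rpow ha.le (by norm_num), h2, mul_right_comm,
    ← Real.rpow_add ha, neg_add_eq_sub, Real.mul_rpow hr₀.le (by positivity),
    Real.rpow_pow_comm (by norm_num)]
  ring

section Threshold

variable {d : ℝ}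

theorem sInf_nonneg_setOf_eq_of_threshold {Q : ℝ → Prop} (hd : 0 ≤ d)
    (hlt : ∀ s, 0 ≤ s → s < d → ¬Q s) (hgt : ∀ s, d < s → Q s) :
    sInf {s | 0 ≤ s ∧ Q s} = d :=
  csInf_eq_of_forall_ge_of_forall_gt_exists_lt ⟨d + 1, by linarith, hgt _ (by linarith)⟩
    (fun s ⟨hs, hQ⟩ => not_lt.1 fun h => hlt s hs h hQ)
    fun w hw => ⟨(d + w) / 2, ⟨by linarith, hgt _ (by linarith)⟩, by linarith⟩

theorem sSup_nonneg_setOf_eq_of_threshold {P : ℝ → Prop} (h₀ : P 0)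
    (hlt : ∀ s, 0 ≤ s → s < d → P s) (hgt : ∀ s, d < s → ¬P s) :
    sSup {s | 0 ≤ s ∧ P s} = d := by
  refine csSup_eq_of_forall_le_of_forall_lt_exists_gt ⟨0, le_rfl, h₀⟩
    (fun s ⟨_, hP⟩ => not_lt.1 fun h => hgt s h hP) fun w hw => ?_
  rcases lt_or_ge w 0 with hw₀ | hw₀
  · exact ⟨0, ⟨le_rfl, h₀⟩, hw₀⟩
  · exact ⟨(w + d) / 2, ⟨by linarith, hlt _ (by linarith) (by linarith)⟩, by linarith⟩

end Threshold

theorem edist_rpow_neg_le_dyadic_sum {X : Type*} [MetricSpace X] {x y : X} {s r₀ : ℝ}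
    (hs : 0 ≤ s) (hr₀ : 0 < r₀) (hxy : x ≠ y) :
    edist x y ^ (-s) ≤ ENNReal.ofReal (r₀ ^ (-s)) +
      ∑' n : ℕ, (closedBall x (r₀ * 2⁻¹ ^ n)).indicator
        (fun _ => ENNReal.ofReal ((r₀ * 2⁻¹ ^ (n + 1)) ^ (-s))) y := by
  have hd : 0 < dist x y := dist_pos.2 hxy
  rw [edist_dist, ENNReal.ofReal_rpow_of_pos hd]
  rcases le_or_gt (dist x y) r₀ with hle | hlt
  · obtain ⟨n, hn₁, hn₂⟩ := exists_nat_pow_near_of_lt_one (div_pos hd hr₀)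
      ((div_le_one hr₀).2 hle) (by norm_num : (0 : ℝ) < 2⁻¹) (by norm_num)
    rw [lt_div_iff₀' hr₀] at hn₁
    rw [div_le_iff₀' hr₀] at hn₂
    refine le_add_left (le_trans ?_ (ENNReal.le_tsum n))
    rw [indicator_of_mem (mem_closedBall'.2 hn₂)]
    exact ENNReal.ofReal_le_ofReal
      (Real.rpow_le_rpow_of_nonpos (by positivity) hn₁.le (neg_nonpos.2 hs))
  · exact le_add_right (ENNReal.ofReal_le_ofReal
      (Real.rpow_le_rpow_of_nonpos hr₀ hlt.le (neg_nonpos.2 hs)))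

section Potential

variable {X : Type*} [MetricSpace X] [MeasurableSpace X] (μ : Measure X) (x : X)

theorem potential_zero : potential μ 0 x = μ univ := by
  simp [potential]

theorem ofReal_rpow_neg_mul_measure_closedBall_le_potential [OpensMeasurableSpace X]
    {s r : ℝ} (hs : 0 ≤ s) (hr : 0 < r) :
    ENNReal.ofReal (r ^ (-s)) * μ (closedBall x r) ≤ potential μ s x :=
  calc ENNReal.ofReal (r ^ (-s)) * μ (closedBall x r)
      = ∫⁻ _ in closedBall x r, ENNReal.ofReal r ^ (-s) ∂μ := by
        rw [setLIntegral_const, ENNReal.ofReal_rpow_of_pos hr]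
    _ ≤ ∫⁻ y in closedBall x r, edist x y ^ (-s) ∂μ :=
        setLIntegral_mono' measurableSet_closedBall fun y hy =>
          ENNReal.rpow_le_rpow_of_nonpos
            (by rw [edist_dist]; exact ENNReal.ofReal_le_ofReal (mem_closedBall'.1 hy))
            (neg_nonpos.2 hs)
    _ ≤ potential μ s x := setLIntegral_le_lintegral _ _

theorem potential_eq_top_of_frequently_le_measure_closedBall [OpensMeasurableSpace X]
    {s t : ℝ} (hs : 0 ≤ s) (hts : t < s)
    (h : ∃ᶠ r in 𝓝[>] 0, ENNReal.ofReal (r ^ t) ≤ μ (closedBall x r)) :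
    potential μ s x = ⊤ := by
  have hlow : ∃ᶠ r in 𝓝[>] 0, ENNReal.ofReal (r ^ (t - s)) ≤ potential μ s x := by
    refine (h.and_eventually self_mem_nhdsWithin).mono fun r ⟨hr, (hr₀ : 0 < r)⟩ => ?_
    calc ENNReal.ofReal (r ^ (t - s)) = ENNReal.ofReal (r ^ (-s)) * ENNReal.ofReal (r ^ t) := by
          rw [← ENNReal.ofReal_mul (Real.rpow_nonneg hr₀.le _), ← Real.rpow_add hr₀,
            neg_add_eq_sub]
      _ ≤ ENNReal.ofReal (r ^ (-s)) * μ (closedBall x r) := mul_le_mul_right hr _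
      _ ≤ potential μ s x := ofReal_rpow_neg_mul_measure_closedBall_le_potential μ x hs hr₀
  have hlim : Tendsto (fun r : ℝ => ENNReal.ofReal (r ^ (t - s))) (𝓝[>] 0) (𝓝 ⊤) :=
    ENNReal.tendsto_ofReal_atTop.comp (tendsto_rpow_neg_nhdsGT_zero (by linarith))
  exact top_unique (le_of_tendsto_of_frequently hlim hlow)

theorem measure_singleton_eq_zero_of_eventually_measure_closedBall_le {t : ℝ} (ht : 0 < t)
    (h : ∀ᶠ r in 𝓝[>] 0, μ (closedBall x r) ≤ ENNReal.ofReal (r ^ t)) : μ {x} = 0 := by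
  have hlim : Tendsto (fun r : ℝ => ENNReal.ofReal (r ^ t)) (𝓝[>] 0) (𝓝 0) := by
    have hcont := (Real.continuousAt_rpow_const 0 t (Or.inr ht.le)).tendsto.mono_left
      (nhdsWithin_le_nhds (s := Ioi 0))
    simpa [Real.zero_rpow ht.ne', Function.comp_def] using
      (ENNReal.continuous_ofReal.tendsto _).comp hcont
  refine le_antisymm (ge_of_tendsto hlim ?_) bot_le
  filter_upwards [h, self_mem_nhdsWithin] with r hr (hr₀ : 0 < r)
  exact (measure_mono (singleton_subset_iff.2 (mem_closedBall_self hr₀.le))).trans hr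

theorem potential_le_dyadic_sum [OpensMeasurableSpace X] {s r₀ : ℝ} (hs : 0 ≤ s)
    (hr₀ : 0 < r₀) (hx : μ {x} = 0) :
    potential μ s x ≤ ENNReal.ofReal (r₀ ^ (-s)) * μ univ +
      ∑' n : ℕ, ENNReal.ofReal ((r₀ * 2⁻¹ ^ (n + 1)) ^ (-s)) *
        μ (closedBall x (r₀ * 2⁻¹ ^ n)) := by
  have hae : ∀ᵐ y ∂μ, x ≠ y := (measure_eq_zero_iff_ae_notMem.1 hx).mono fun y hy => Ne.symm hy
  refine (lintegral_mono_ae (hae.mono fun y => edist_rpow_neg_le_dyadic_sum hs hr₀)).trans_eq ?_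
  rw [lintegral_add_left measurable_const, lintegral_const, lintegral_tsum fun n =>
    (measurable_const.indicator measurableSet_closedBall).aemeasurable]
  simp_rw [lintegral_indicator_const measurableSet_closedBall]

theorem potential_lt_top_of_eventually_measure_closedBall_le [OpensMeasurableSpace X]
    [IsFiniteMeasure μ] {s t : ℝ} (hs : 0 ≤ s) (hst : s < t)
    (h : ∀ᶠ r in 𝓝[>] 0, μ (closedBall x r) ≤ ENNReal.ofReal (r ^ t)) :
    potential μ s x < ⊤ := by
  obtain ⟨r₀, hr₀ : 0 < r₀, hball⟩ := mem_nhdsGT_iff_exists_Ioc_subset.1 h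
  have hx :=
    measure_singleton_eq_zero_of_eventually_measure_closedBall_le μ x (hs.trans_lt hst) h
  set C := ENNReal.ofReal (2 ^ s * r₀ ^ (t - s))
  set q := ENNReal.ofReal ((2⁻¹ : ℝ) ^ (t - s))
  have hq : q < 1 := ENNReal.ofReal_lt_one.2 (Real.rpow_lt_one (by norm_num) (by norm_num)
    (sub_pos.2 hst))
  have hterm : ∀ n : ℕ, ENNReal.ofReal ((r₀ * 2⁻¹ ^ (n + 1)) ^ (-s)) *
      μ (closedBall x (r₀ * 2⁻¹ ^ n)) ≤ C * q ^ n := fun n =>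
    calc _ ≤ ENNReal.ofReal ((r₀ * 2⁻¹ ^ (n + 1)) ^ (-s)) *
          ENNReal.ofReal ((r₀ * 2⁻¹ ^ n) ^ t) :=
          mul_le_mul_right (hball ⟨by positivity,
            mul_le_of_le_one_right hr₀.le (pow_le_one₀ (by norm_num) (by norm_num))⟩) _
      _ = C * q ^ n := by
          rw [← ENNReal.ofReal_mul (by positivity), Real.dyadic_rpow_mul_rpow hr₀,
            ENNReal.ofReal_mul (by positivity), ENNReal.ofReal_pow (by positivity)]
  refine (potential_le_dyadic_sum μ x hs hr₀ hx).trans_lt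
    (ENNReal.add_lt_top.2 ⟨ENNReal.mul_lt_top ENNReal.ofReal_lt_top (measure_lt_top μ univ), ?_⟩)
  calc _ ≤ ∑' n : ℕ, C * q ^ n := ENNReal.tsum_le_tsum hterm
    _ = C * (1 - q)⁻¹ := by rw [ENNReal.tsum_mul_left, ENNReal.tsum_geometric]
    _ < ⊤ := ENNReal.mul_lt_top ENNReal.ofReal_lt_top
        (ENNReal.inv_lt_top.2 (tsub_pos_of_lt hq))

end Potential

section LocalDimension

variable {X : Type*} [MetricSpace X] [MeasurableSpace X] (μ : Measure X) (x : X)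

/-- Since `Real.log 0 = 0`, this is `0` at every scale where the ball is `μ`-null. -/
noncomputable def dimAtScale (r : ℝ) : ℝ :=
  Real.log (μ (closedBall x r)).toReal / Real.log r

theorem lowerLocalDim_eq_liminf_dimAtScale :
    lowerLocalDim μ x = liminf (dimAtScale μ x) (𝓝[>] 0) :=
  rfl

theorem measure_closedBall_le_iff_le_dimAtScale [IsFiniteMeasure μ] {r t : ℝ}
    (hμ : μ (closedBall x r) ≠ 0) (hr₀ : 0 < r) (hr₁ : r < 1) :
    μ (closedBall x r) ≤ ENNReal.ofReal (r ^ t) ↔ t ≤ dimAtScale μ x r := by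
  rw [dimAtScale, Real.le_log_div_log_iff (ENNReal.toReal_pos hμ (measure_ne_top μ _)) hr₀ hr₁,
    ENNReal.le_ofReal_iff_toReal_le (measure_ne_top μ _) (Real.rpow_nonneg hr₀.le t)]

theorem eventually_measure_closedBall_le_of_eventually_le_dimAtScale [IsFiniteMeasure μ]
    {t : ℝ} (h : ∀ᶠ r in 𝓝[>] 0, t ≤ dimAtScale μ x r) :
    ∀ᶠ r in 𝓝[>] 0, μ (closedBall x r) ≤ ENNReal.ofReal (r ^ t) := by
  filter_upwards [h, Ioo_mem_nhdsGT one_pos] with r hr ⟨hr₀, hr₁⟩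
  rcases eq_or_ne (μ (closedBall x r)) 0 with hμ | hμ
  · simp [hμ]
  · exact (measure_closedBall_le_iff_le_dimAtScale μ x hμ hr₀ hr₁).2 hr

theorem potential_lt_top_of_lt_lowerLocalDim [OpensMeasurableSpace X] [IsFiniteMeasure μ]
    {s : ℝ} (hs : 0 ≤ s) (h : s < lowerLocalDim μ x) : potential μ s x < ⊤ := by
  rw [lowerLocalDim_eq_liminf_dimAtScale] at h
  have hbdd : IsBoundedUnder (· ≥ ·) (𝓝[>] 0) (dimAtScale μ x) := by
    by_contra hbdd
    rw [Real.liminf_of_not_isBoundedUnder hbdd] at h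
    linarith
  obtain ⟨t, hst, ht⟩ := exists_between h
  exact potential_lt_top_of_eventually_measure_closedBall_le μ x hs hst
    (eventually_measure_closedBall_le_of_eventually_le_dimAtScale μ x
      ((eventually_lt_of_lt_liminf ht hbdd).mono fun _ => le_of_lt))

theorem potential_eq_top_of_lowerLocalDim_lt [OpensMeasurableSpace X] [IsFiniteMeasure μ]
    (hμ : ∃ t : ℝ, ∃ᶠ r in 𝓝[>] 0, ENNReal.ofReal (r ^ t) < μ (closedBall x r))
    {s : ℝ} (hs : 0 ≤ s) (h : lowerLocalDim μ x < s) : potential μ s x = ⊤ := by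
  obtain ⟨t₀, ht₀⟩ := hμ
  have hpos : ∀ r, 0 < r → μ (closedBall x r) ≠ 0 := fun r hr => by
    obtain ⟨r', hr', hr'r⟩ := (ht₀.and_eventually (Ioo_mem_nhdsGT hr)).exists
    exact ((pos_of_gt hr').trans_le (measure_mono (closedBall_subset_closedBall hr'r.2.le))).ne'
  have hcobdd : IsCoboundedUnder (· ≥ ·) (𝓝[>] 0) (dimAtScale μ x) := by
    refine ⟨t₀, fun a ha => not_lt.1 fun hlt => ht₀ ?_⟩
    filter_upwards [eventually_measure_closedBall_le_of_eventually_le_dimAtScale μ x ha,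
      Ioo_mem_nhdsGT one_pos] with r hr ⟨hr₀, hr₁⟩
    exact not_lt.2 (hr.trans
      (ENNReal.ofReal_le_ofReal (Real.rpow_le_rpow_of_exponent_ge hr₀ hr₁.le hlt.le)))
  rw [lowerLocalDim_eq_liminf_dimAtScale] at h
  obtain ⟨t, hdt, hts⟩ := exists_between h
  refine potential_eq_top_of_frequently_le_measure_closedBall μ x hs hts ?_
  refine ((frequently_lt_of_liminf_lt hcobdd hdt).and_eventually (Ioo_mem_nhdsGT one_pos)).mono
    fun r ⟨hr, hr₀, hr₁⟩ => ?_
  exact (not_le.1 fun hle =>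
    hr.not_ge ((measure_closedBall_le_iff_le_dimAtScale μ x (hpos r hr₀) hr₀ hr₁).1 hle)).le

theorem lowerLocalDim_eq_zero_of_forall_eventually_measure_closedBall_le [IsFiniteMeasure μ]
    (h : ∀ t : ℝ, ∀ᶠ r in 𝓝[>] 0, μ (closedBall x r) ≤ ENNReal.ofReal (r ^ t)) :
    lowerLocalDim μ x = 0 := by
  rw [lowerLocalDim_eq_liminf_dimAtScale]
  by_cases hpos : ∀ r, 0 < r → μ (closedBall x r) ≠ 0
  · refine Real.liminf_of_not_isCoboundedUnder fun ⟨b, hb⟩ => ?_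
    have hev : ∀ᶠ r in 𝓝[>] 0, b + 1 ≤ dimAtScale μ x r := by
      filter_upwards [h (b + 1), Ioo_mem_nhdsGT one_pos] with r hr ⟨hr₀, hr₁⟩
      exact (measure_closedBall_le_iff_le_dimAtScale μ x (hpos r hr₀) hr₀ hr₁).1 hr
    linarith [hb _ hev]
  · push Not at hpos
    obtain ⟨r₀, hr₀, hμ⟩ := hpos
    have hzero : dimAtScale μ x =ᶠ[𝓝[>] 0] fun _ => 0 := by
      filter_upwards [Ioc_mem_nhdsGT hr₀] with r hr
      simp [dimAtScale, measure_mono_null (closedBall_subset_closedBall hr.2) hμ]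
    rw [liminf_congr hzero, liminf_const]

end LocalDimension

theorem lowerLocalDim_eq_potential_general {X : Type*} [MetricSpace X]
    [MeasurableSpace X] [BorelSpace X]
    (μ : Measure X) [IsFiniteMeasure μ] (x : X) :
    lowerLocalDim μ x = sInf {s : ℝ | 0 ≤ s ∧ potential μ s x = ⊤} ∧
    lowerLocalDim μ x = sSup {s : ℝ | 0 ≤ s ∧ potential μ s x < ⊤} := by
  by_cases hμ : ∀ t : ℝ, ∀ᶠ r in 𝓝[>] 0, μ (closedBall x r) ≤ ENNReal.ofReal (r ^ t)
  · -- Every potential is finite, and both sides are `0` only by convention: `sInf ∅ = 0`,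
    -- `sSup (Ici 0) = 0`, and the liminf is of a function unbounded above or eventually `0`.
    have hfin : ∀ s : ℝ, 0 ≤ s → potential μ s x < ⊤ := fun s hs =>
      potential_lt_top_of_eventually_measure_closedBall_le μ x hs (lt_add_one s) (hμ _)
    have hT : {s : ℝ | 0 ≤ s ∧ potential μ s x = ⊤} = ∅ :=
      eq_empty_of_forall_notMem fun s ⟨hs, htop⟩ => (hfin s hs).ne htop
    have hF : {s : ℝ | 0 ≤ s ∧ potential μ s x < ⊤} = Ici 0 :=
      ext fun s => ⟨And.left, fun hs => ⟨hs, hfin s hs⟩⟩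
    rw [lowerLocalDim_eq_zero_of_forall_eventually_measure_closedBall_le μ x hμ, hT, hF,
      Real.sInf_empty, Real.sSup_of_not_bddAbove (not_bddAbove_Ici 0)]
    exact ⟨rfl, rfl⟩
  push Not at hμ
  have hgt : ∀ s, lowerLocalDim μ x < s → 0 ≤ s → potential μ s x = ⊤ := fun s h hs =>
    potential_eq_top_of_lowerLocalDim_lt μ x hμ hs h
  have h₀ : potential μ 0 x < ⊤ := potential_zero μ x ▸ measure_lt_top μ univ
  have hd : 0 ≤ lowerLocalDim μ x := not_lt.1 fun h => h₀.ne (hgt 0 h le_rfl)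
  have hlt : ∀ s, 0 ≤ s → s < lowerLocalDim μ x → potential μ s x < ⊤ := fun s hs =>
    potential_lt_top_of_lt_lowerLocalDim μ x hs
  refine ⟨(sInf_nonneg_setOf_eq_of_threshold hd (fun s hs h => (hlt s hs h).ne)
    fun s h => hgt s h (hd.trans h.le)).symm, (sSup_nonneg_setOf_eq_of_threshold h₀ hlt
    fun s h => not_lt.2 (hgt s h (hd.trans h.le)).ge).symm⟩

theorem lowerLocalDim_eq_potential {X : Type*} [MetricSpace X] [CompactSpace X]
    [MeasurableSpace X] [BorelSpace X]
    (μ : Measure X) [IsFiniteMeasure μ] [μ.Regular] (x : X) :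
    lowerLocalDim μ x = sInf {s : ℝ | 0 ≤ s ∧ potential μ s x = ⊤} ∧
    lowerLocalDim μ x = sSup {s : ℝ | 0 ≤ s ∧ potential μ s x < ⊤} :=
  lowerLocalDim_eq_potential_general μ x
end

section
/- For a finite Borel regular measure μ on a compact metric space, the correlation dimension of μ, defined as sup{s : I_s(μ) < ∞} where I_s(μ) = ∬ d(x,y)^{-s} dμ(x) dμ(y), equals liminf_{r→0} log(∫ μ(B(x,r)) dμ(x)) / log r. -/
open MeasureTheory Filter Metric Set Topology
open scoped ENNReal

/-- The upper local dimension of a measure at a point. -/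
noncomputable def upperLocalDim {X : Type*} [MetricSpace X] [MeasurableSpace X]
    (μ : Measure X) (x : X) : ℝ :=
  limsup (fun r : ℝ => Real.log (μ (closedBall x r)).toReal / Real.log r) (𝓝[>] 0)

/-- The `s`-energy of `μ`. -/
noncomputable def energy {X : Type*} [MetricSpace X] [MeasurableSpace X]
    (μ : Measure X) (s : ℝ) : ℝ≥0∞ :=
  ∫⁻ x, ∫⁻ y, edist x y ^ (-s) ∂μ ∂μ

/-- The correlation dimension of `μ`: `sup { s : I_s(μ) < ∞ }`. -/
noncomputable def corrDim {X : Type*} [MetricSpace X] [MeasurableSpace X]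
    (μ : Measure X) : ℝ :=
  sSup {s : ℝ | energy μ s < ⊤}

/-- The lower Hausdorff dimension of `μ`: the `μ`-essential infimum of the
lower local dimension. -/
noncomputable def lowerHausdorffDim {X : Type*} [MetricSpace X] [MeasurableSpace X]
    (μ : Measure X) : ℝ :=
  essInf (fun x => lowerLocalDim μ x) μ

/-!
Write `C(r) = ∫ μ(B(x, r)) dμ(x) = (μ × μ){d ≤ r}`. Chebyshev's inequality for `d^(-s)` gives
`C(r) ≤ r^s I_s(μ)`, so finite `s`-energy forces `log C(r) / log r ≥ s - o(1)` as `r → 0`.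
Conversely, if `C(r) ≤ r^a` for small `r` and `0 < s < a`, splitting the pairs into dyadic shells
of distance bounds `I_s(μ)` by a convergent geometric series. Hence the exponents of finite energy
and the eventual lower bounds of `log C(r) / log r` each contain everything below any element of
the other set, so their suprema agree. For `μ = 0` both sides are the junk value `0`.
-/

lemma Real.sSup_eq_sSup_of_forall_Iio_subset {S T : Set ℝ} (hST : ∀ s ∈ S, Iio s ⊆ T)
    (hTS : ∀ t ∈ T, Iio t ⊆ S) : sSup S = sSup T := by
  have upperBounds_subset :
      ∀ {A B : Set ℝ}, (∀ a ∈ A, Iio a ⊆ B) → upperBounds B ⊆ upperBounds A :=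
    fun h b hb a ha => le_of_forall_lt_imp_le_of_dense fun c hc => hb (h a ha hc)
  have nonempty : ∀ {A B : Set ℝ}, (∀ a ∈ A, Iio a ⊆ B) → A.Nonempty → B.Nonempty :=
    fun h ⟨a, ha⟩ => ⟨a - 1, h a ha (sub_one_lt a)⟩
  have hUB : upperBounds S = upperBounds T :=
    (upperBounds_subset hTS).antisymm (upperBounds_subset hST)
  rcases S.eq_empty_or_nonempty with rfl | hS
  · rw [not_nonempty_iff_eq_empty.1 fun hT => (nonempty hTS hT).ne_empty rfl]
  by_cases hB : BddAbove S
  · have hLUB : IsLUB T (sSup S) := by rw [IsLUB, ← hUB]; exact isLUB_csSup hS hB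
    exact (hLUB.csSup_eq (nonempty hST hS)).symm
  · rw [Real.sSup_of_not_bddAbove hB, Real.sSup_of_not_bddAbove (by rwa [BddAbove, ← hUB])]

lemma Real.le_rpow_of_le_log_div_log {x r a : ℝ} (hx : 0 ≤ x) (hr₀ : 0 < r) (hr₁ : r < 1)
    (h : a ≤ Real.log x / Real.log r) : x ≤ r ^ a := by
  rcases hx.eq_or_lt with rfl | hx
  · positivity
  rw [le_div_iff_of_neg (Real.log_neg hr₀ hr₁), ← Real.log_rpow hr₀] at h
  exact (Real.log_le_log_iff hx (by positivity)).1 h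

lemma Real.eventually_le_log_div_log_of_le_mul_rpow {g : ℝ → ℝ} {C s a : ℝ} (hC : 0 < C)
    (has : a < s)
    (hg : ∀ᶠ r in 𝓝[>] 0, 0 < g r ∧ g r ≤ C * r ^ s) :
    ∀ᶠ r in 𝓝[>] 0, a ≤ Real.log (g r) / Real.log r := by
  have hlim : Tendsto (fun r => s + Real.log C / Real.log r) (𝓝[>] 0) (𝓝 s) := by
    simpa using tendsto_const_nhds.add
      (tendsto_const_nhds.div_atBot Real.tendsto_log_nhdsGT_zero)
  filter_upwards [hg, hlim.eventually (lt_mem_nhds has), Ioo_mem_nhdsGT one_pos]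
    with r ⟨hg₀, hgC⟩ ha ⟨hr₀, hr₁⟩
  have hlog : Real.log r < 0 := Real.log_neg hr₀ hr₁
  calc a ≤ s + Real.log C / Real.log r := ha.le
    _ = Real.log (C * r ^ s) / Real.log r := by
      rw [Real.log_mul hC.ne' (by positivity), Real.log_rpow hr₀, add_div,
        mul_div_cancel_right₀ _ hlog.ne, add_comm]
    _ ≤ Real.log (g r) / Real.log r :=
      div_le_div_of_nonpos_of_le hlog.le (Real.log_le_log hg₀ hgC)

lemma Real.dyadic_rpow_neg_mul_rpow {r : ℝ} (hr : 0 < r) (s a : ℝ) (n : ℕ) :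
    (r * 2⁻¹ ^ (n + 1)) ^ (-s) * (r * 2⁻¹ ^ n) ^ a =
      2 ^ s * r ^ (a - s) * (2⁻¹ ^ (a - s)) ^ n := by
  have hρ : 0 < r * 2⁻¹ ^ n := by positivity
  rw [pow_succ, ← mul_assoc, Real.mul_rpow hρ.le (by norm_num), Real.inv_rpow zero_le_two,
    Real.rpow_neg zero_le_two, inv_inv, mul_right_comm, ← Real.rpow_add hρ, neg_add_eq_sub,
    Real.mul_rpow hr.le (by positivity), ← Real.rpow_pow_comm (by norm_num)]
  ring

lemma ENNReal.rpow_neg_le_rpow_neg {x y : ℝ≥0∞} {s : ℝ} (hs : 0 ≤ s) (h : x ≤ y) :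
    y ^ (-s) ≤ x ^ (-s) := by
  rw [ENNReal.rpow_neg, ENNReal.rpow_neg]
  exact ENNReal.inv_le_inv.2 (ENNReal.rpow_le_rpow h hs)

lemma ENNReal.ofReal_rpow_neg_le_add_tsum {y r s : ℝ} (hr : 0 < r) (hs : 0 < s) :
    ENNReal.ofReal y ^ (-s) ≤ ENNReal.ofReal (r ^ (-s)) +
      ∑' n : ℕ, if y ≤ r * 2⁻¹ ^ n then ENNReal.ofReal ((r * 2⁻¹ ^ (n + 1)) ^ (-s)) else 0 := by
  have hρ : ∀ n : ℕ, 0 < r * 2⁻¹ ^ n := fun n => by positivity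
  rcases le_or_gt y 0 with hy | hy
  · have hterm : ∀ n : ℕ, ENNReal.ofReal (r ^ (-s)) ≤
        if y ≤ r * 2⁻¹ ^ n then ENNReal.ofReal ((r * 2⁻¹ ^ (n + 1)) ^ (-s)) else 0 := fun n => by
      rw [if_pos (hy.trans (hρ n).le)]
      refine ENNReal.ofReal_le_ofReal (Real.rpow_le_rpow_of_nonpos (hρ _) ?_ (by linarith))
      exact mul_le_of_le_one_right hr.le (pow_le_one₀ (by norm_num) (by norm_num))
    have htop : ∑' n : ℕ, ENNReal.ofReal (r ^ (-s)) = ⊤ :=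
      ENNReal.tsum_const_eq_top_of_ne_zero (by simpa using Real.rpow_pos_of_pos hr _)
    rw [ENNReal.ofReal_of_nonpos hy, ENNReal.zero_rpow_of_neg (by linarith), ← htop]
    exact (ENNReal.tsum_le_tsum hterm).trans le_add_self
  rcases lt_or_ge r y with hry | hyr
  · refine le_trans ?_ le_self_add
    rw [← ENNReal.ofReal_rpow_of_pos hr]
    exact ENNReal.rpow_neg_le_rpow_neg hs.le (ENNReal.ofReal_le_ofReal hry.le)
  obtain ⟨n, hn₁, hn⟩ := exists_nat_pow_near_of_lt_one (div_pos hy hr) ((div_le_one hr).2 hyr)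
    (by norm_num : (0 : ℝ) < 2⁻¹) (by norm_num)
  rw [div_le_iff₀ hr, mul_comm] at hn
  rw [lt_div_iff₀ hr, mul_comm] at hn₁
  refine le_trans ?_ (le_trans (ENNReal.le_tsum n) le_add_self)
  rw [if_pos hn, ← ENNReal.ofReal_rpow_of_pos (hρ _)]
  exact ENNReal.rpow_neg_le_rpow_neg hs.le (ENNReal.ofReal_le_ofReal hn₁.le)

section Integrals

variable {α : Type*} [MeasurableSpace α] {ν : Measure α} {f : α → ℝ}

lemma ofReal_rpow_neg_mul_measure_le_lintegral (hf : Measurable f) {s : ℝ} (hs : 0 ≤ s)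
    (r : ℝ) :
    ENNReal.ofReal r ^ (-s) * ν {x | f x ≤ r} ≤ ∫⁻ x, ENNReal.ofReal (f x) ^ (-s) ∂ν :=
  (mul_le_mul_right (measure_mono fun _ hx =>
      ENNReal.rpow_neg_le_rpow_neg hs (ENNReal.ofReal_le_ofReal hx)) _).trans
    (mul_meas_ge_le_lintegral₀ (by fun_prop) _)

/-- The dyadic shells `r 2⁻ⁿ⁻¹ < f ≤ r 2⁻ⁿ` contribute a geometric series of ratio `2^(s - a)`. -/
lemma lintegral_ofReal_rpow_neg_lt_top [IsFiniteMeasure ν] (hf : Measurable f) {s a : ℝ}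
    (hs : 0 < s) (hsa : s < a)
    (hν : ∀ᶠ t in 𝓝[>] 0, ν {x | f x ≤ t} ≤ ENNReal.ofReal (t ^ a)) :
    ∫⁻ x, ENNReal.ofReal (f x) ^ (-s) ∂ν < ⊤ := by
  obtain ⟨r, hr : 0 < r, hrν⟩ := mem_nhdsGT_iff_exists_Ioc_subset.1 hν
  set ρ : ℕ → ℝ := fun n => r * 2⁻¹ ^ n
  have hρ_pos : ∀ n, 0 < ρ n := fun n => by positivity
  have hρ_le : ∀ n, ρ n ≤ r := fun n =>
    mul_le_of_le_one_right hr.le (pow_le_one₀ (by norm_num) (by norm_num))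
  have hq : (2⁻¹ : ℝ) ^ (a - s) < 1 := Real.rpow_lt_one (by norm_num) (by norm_num) (by linarith)
  have hset : ∀ t : ℝ, MeasurableSet {x | f x ≤ t} := fun _ =>
    measurableSet_le hf measurable_const
  calc ∫⁻ x, ENNReal.ofReal (f x) ^ (-s) ∂ν
      ≤ ∫⁻ x, (ENNReal.ofReal (r ^ (-s)) + ∑' n : ℕ,
          {x | f x ≤ ρ n}.indicator (fun _ => ENNReal.ofReal (ρ (n + 1) ^ (-s))) x) ∂ν :=
        lintegral_mono fun x => by
          simpa only [indicator_apply, mem_ofPred_eq] using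
            ENNReal.ofReal_rpow_neg_le_add_tsum (y := f x) hr hs
    _ = ENNReal.ofReal (r ^ (-s)) * ν univ +
          ∑' n : ℕ, ENNReal.ofReal (ρ (n + 1) ^ (-s)) * ν {x | f x ≤ ρ n} := by
        rw [lintegral_add_left measurable_const, lintegral_const,
          lintegral_tsum fun n => (measurable_const.indicator (hset _)).aemeasurable]
        simp only [lintegral_indicator_const (hset _)]
    _ ≤ ENNReal.ofReal (r ^ (-s)) * ν univ + ∑' n : ℕ,
          ENNReal.ofReal (2 ^ s * r ^ (a - s)) * ENNReal.ofReal (2⁻¹ ^ (a - s)) ^ n := by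
        refine add_le_add le_rfl (ENNReal.tsum_le_tsum fun n => ?_)
        calc ENNReal.ofReal (ρ (n + 1) ^ (-s)) * ν {x | f x ≤ ρ n}
            ≤ ENNReal.ofReal (ρ (n + 1) ^ (-s)) * ENNReal.ofReal (ρ n ^ a) := by
              gcongr
              exact hrν ⟨hρ_pos n, hρ_le n⟩
          _ = ENNReal.ofReal (2 ^ s * r ^ (a - s)) * ENNReal.ofReal (2⁻¹ ^ (a - s)) ^ n := by
              rw [← ENNReal.ofReal_mul (by positivity), Real.dyadic_rpow_neg_mul_rpow hr,
                ENNReal.ofReal_mul (by positivity), ENNReal.ofReal_pow (by positivity)]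
    _ < ⊤ := by
        rw [ENNReal.tsum_mul_left, ENNReal.tsum_geometric]
        refine ENNReal.add_lt_top.2 ⟨ENNReal.mul_lt_top ENNReal.ofReal_lt_top
          (measure_lt_top _ _), ENNReal.mul_lt_top ENNReal.ofReal_lt_top ?_⟩
        rw [ENNReal.inv_lt_top, tsub_pos_iff_lt]
        exact ENNReal.ofReal_lt_one.2 hq

end Integrals

noncomputable def corrIntegral {X : Type*} [MetricSpace X] [MeasurableSpace X]
    (μ : Measure X) (r : ℝ) : ℝ≥0∞ :=
  ∫⁻ x, μ (closedBall x r) ∂μ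

section MetricSpace

variable {X : Type*} [MetricSpace X] [MeasurableSpace X] (μ : Measure X)

lemma energy_lt_top_of_nonpos [CompactSpace X] [IsFiniteMeasure μ] {s : ℝ} (hs : s ≤ 0) :
    energy μ s < ⊤ := by
  set D := Metric.ediam (univ : Set X)
  have hD : D ≠ ⊤ := (Metric.isBounded_of_compactSpace (s := univ)).ediam_ne_top
  calc energy μ s ≤ ∫⁻ _, ∫⁻ _, D ^ (-s) ∂μ ∂μ :=
        lintegral_mono fun x => lintegral_mono fun y => ENNReal.rpow_le_rpow
          (Metric.edist_le_ediam_of_mem (mem_univ x) (mem_univ y)) (neg_nonneg.2 hs)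
    _ < ⊤ := by
        simp only [lintegral_const]
        exact ENNReal.mul_lt_top (ENNReal.mul_lt_top
          (ENNReal.rpow_lt_top_of_nonneg (neg_nonneg.2 hs) hD) (measure_lt_top _ _))
          (measure_lt_top _ _)

variable [OpensMeasurableSpace X] [SecondCountableTopology X] [SFinite μ]

lemma energy_eq_lintegral_prod (s : ℝ) :
    energy μ s = ∫⁻ p, ENNReal.ofReal (dist p.1 p.2) ^ (-s) ∂(μ.prod μ) := by
  simp only [energy, edist_dist]
  exact (lintegral_prod (fun p : X × X => ENNReal.ofReal (dist p.1 p.2) ^ (-s))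
    (by fun_prop)).symm

lemma corrIntegral_eq_measure_prod (r : ℝ) :
    corrIntegral μ r = μ.prod μ {p | dist p.1 p.2 ≤ r} := by
  rw [Measure.prod_apply (measurableSet_le (by fun_prop) measurable_const)]
  refine lintegral_congr fun x => congrArg μ ?_
  ext y
  simp [dist_comm]

lemma corrIntegral_lt_top [IsFiniteMeasure μ] (r : ℝ) : corrIntegral μ r < ⊤ := by
  rw [corrIntegral_eq_measure_prod]
  exact measure_lt_top _ _

lemma corrIntegral_pos (hμ : μ ≠ 0) {r : ℝ} (hr : 0 < r) : 0 < corrIntegral μ r := by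
  obtain ⟨x, hx⟩ := μ.nonempty_support hμ
  have hball : 0 < μ (ball x (r / 2)) :=
    (μ.mem_support_iff_forall x).1 hx _ (ball_mem_nhds x (half_pos hr))
  rw [corrIntegral_eq_measure_prod]
  calc 0 < μ (ball x (r / 2)) * μ (ball x (r / 2)) := ENNReal.mul_pos hball.ne' hball.ne'
    _ = μ.prod μ (ball x (r / 2) ×ˢ ball x (r / 2)) := (Measure.prod_prod _ _).symm
    _ ≤ μ.prod μ {p | dist p.1 p.2 ≤ r} := measure_mono fun p ⟨h₁, h₂⟩ =>
        (dist_triangle_right _ _ x).trans (by linarith [mem_ball.1 h₁, mem_ball.1 h₂])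

lemma corrIntegral_le_ofReal_rpow_mul_energy {s r : ℝ} (hs : 0 ≤ s) (hr : 0 < r) :
    corrIntegral μ r ≤ ENNReal.ofReal (r ^ s) * energy μ s := by
  have h := ofReal_rpow_neg_mul_measure_le_lintegral (ν := μ.prod μ)
    (f := fun p => dist p.1 p.2) (by fun_prop) hs r
  have hr' : 0 < r ^ (-s) := by positivity
  rwa [← corrIntegral_eq_measure_prod, ← energy_eq_lintegral_prod, ENNReal.ofReal_rpow_of_pos hr,
    ENNReal.mul_le_iff_le_inv (by simpa using hr') ENNReal.ofReal_ne_top,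
    ← ENNReal.ofReal_inv_of_pos hr', Real.rpow_neg hr.le, inv_inv] at h

end MetricSpace

section CompactSpace

variable {X : Type*} [MetricSpace X] [CompactSpace X] [MeasurableSpace X]
  [OpensMeasurableSpace X] (μ : Measure X) [IsFiniteMeasure μ]

lemma energy_lt_top_of_eventually_le_log_div_log {s a : ℝ} (hsa : s < a)
    (ha : ∀ᶠ r in 𝓝[>] 0, a ≤ Real.log (corrIntegral μ r).toReal / Real.log r) :
    energy μ s < ⊤ := by
  rcases le_or_gt s 0 with hs | hs
  · exact energy_lt_top_of_nonpos μ hs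
  rw [energy_eq_lintegral_prod]
  refine lintegral_ofReal_rpow_neg_lt_top (by fun_prop) hs hsa ?_
  filter_upwards [ha, Ioo_mem_nhdsGT one_pos] with r hr ⟨hr₀, hr₁⟩
  rw [← corrIntegral_eq_measure_prod, ← ENNReal.ofReal_toReal (corrIntegral_lt_top μ r).ne]
  exact ENNReal.ofReal_le_ofReal
    (Real.le_rpow_of_le_log_div_log ENNReal.toReal_nonneg hr₀ hr₁ hr)

lemma eventually_le_log_div_log_of_energy_lt_top (hμ : μ ≠ 0) {s a : ℝ}
    (hs : energy μ s < ⊤) (has : a < s) :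
    ∀ᶠ r in 𝓝[>] 0, a ≤ Real.log (corrIntegral μ r).toReal / Real.log r := by
  wlog hs₀ : 0 ≤ s generalizing s
  · exact this (energy_lt_top_of_nonpos μ le_rfl) (has.trans (not_le.1 hs₀)) le_rfl
  have hpos : ∀ r, 0 < r → 0 < (corrIntegral μ r).toReal := fun r hr =>
    ENNReal.toReal_pos (corrIntegral_pos μ hμ hr).ne' (corrIntegral_lt_top μ r).ne
  have hbound : ∀ r, 0 < r → (corrIntegral μ r).toReal ≤ (energy μ s).toReal * r ^ s :=
    fun r hr => by
      rw [mul_comm, ← ENNReal.toReal_ofReal (by positivity : 0 ≤ r ^ s), ← ENNReal.toReal_mul]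
      exact ENNReal.toReal_mono (ENNReal.mul_ne_top ENNReal.ofReal_ne_top hs.ne)
        (corrIntegral_le_ofReal_rpow_mul_energy μ hs₀ hr)
  have henergy : 0 < (energy μ s).toReal := by
    simpa using (hpos 1 one_pos).trans_le (hbound 1 one_pos)
  exact Real.eventually_le_log_div_log_of_le_mul_rpow henergy has
    (eventually_mem_nhdsWithin.mono fun r hr => ⟨hpos r hr, hbound r hr⟩)

end CompactSpace

theorem corrDim_eq_liminf_general {X : Type*} [MetricSpace X] [CompactSpace X]
    [MeasurableSpace X] [BorelSpace X]
    (μ : Measure X) [IsFiniteMeasure μ] :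
    corrDim μ =
      liminf (fun r : ℝ =>
        Real.log (∫⁻ x, μ (closedBall x r) ∂μ).toReal / Real.log r) (𝓝[>] 0) := by
  rcases eq_or_ne μ 0 with rfl | hμ
  · simp [corrDim, energy]
  rw [corrDim, liminf_eq]
  exact Real.sSup_eq_sSup_of_forall_Iio_subset
    (fun s hs a has => eventually_le_log_div_log_of_energy_lt_top μ hμ hs has)
    (fun a ha s hsa => energy_lt_top_of_eventually_le_log_div_log μ hsa ha)

theorem corrDim_eq_liminf {X : Type*} [MetricSpace X] [CompactSpace X]
    [MeasurableSpace X] [BorelSpace X]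
    (μ : Measure X) [IsFiniteMeasure μ] [μ.Regular] :
    corrDim μ =
      liminf (fun r : ℝ =>
        Real.log (∫⁻ x, μ (closedBall x r) ∂μ).toReal / Real.log r) (𝓝[>] 0) :=
  corrDim_eq_liminf_general μ
end

section
/- For any finite Borel regular measure μ on a compact metric space X and any ε > 0, there exists a compact set A ⊂ X with μ(X \ A) < ε such that the correlation dimension of μ|_A is at least the lower Hausdorff dimension of μ. -/
open MeasureTheory Filter Metric Set Topology
open scoped ENNReal

/-!
Write `D` for the lower Hausdorff dimension; only `D > 0` needs work. For `0 < s < D`, almost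
every point satisfies `μ (B(x, r)) ≤ r ^ s` for small `r`, hence `≤ K r ^ s` for all `r` and some
`K`. These Frostman sets are closed and exhaust almost all of `X`, so intersecting suitable ones
along a sequence `s ↑ D` gives a compact `A` of almost full measure; summing the Frostman bounds
over dyadic shells shows that `μ|_A` has finite `t`-energy for every `t < D`.

Since `corrDim` is a real `sSup` (`0` for an unbounded set), one also needs finite energy to fail
for large `t`. A positive real liminf is finite, so almost every point is `b`-heavy for some
`b : ℕ`: `μ (B(x, 2⁻ᵏ)) ≥ 2^{-(k+1) b}` for infinitely many `k`. If `μ|_A` had finite `t`-energy,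
`t > b`, then on a sublevel set `F` of its `t`-potential `μ (F ∩ B(y, ρ)) ≲ ρ ^ t`, so a heavy point
of `F` must see mass `≳ 2^{-kb}` outside `F` at infinitely many scales. By the symmetry
`∫_F μ (Fᶜ ∩ B(x, ρ)) = ∫_{Fᶜ} μ (F ∩ B(y, ρ))` the measures of these exceptional sets are summable,
and Borel–Cantelli makes the heavy points of `F` null, whereas they must charge `A`.
-/

open scoped NNReal

section LiminfReal

variable {ι : Type*} {f : Filter ι} {u : ι → ℝ}

lemma eventually_lt_of_nonneg_of_lt_liminf {b : ℝ} (hb : 0 ≤ b) (h : b < liminf u f) :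
    ∀ᶠ i in f, b < u i :=
  eventually_lt_of_lt_liminf h <| by
    by_contra hu
    rw [Real.liminf_of_not_isBoundedUnder hu] at h
    linarith

lemma frequently_lt_of_liminf_lt_of_pos {b : ℝ} (h0 : 0 < liminf u f) (h : liminf u f < b) :
    ∃ᶠ i in f, u i < b :=
  frequently_lt_of_liminf_lt (by
    by_contra hu
    rw [Real.liminf_of_not_isCoboundedUnder hu] at h0
    exact lt_irrefl _ h0) h

end LiminfReal

lemma le_rpow_of_le_log_div_log {m r s : ℝ} (hm : 0 ≤ m) (hr0 : 0 < r) (hr1 : r < 1)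
    (h : s ≤ Real.log m / Real.log r) : m ≤ r ^ s := by
  rcases hm.eq_or_lt with rfl | hm
  · positivity
  rw [le_div_iff_of_neg (Real.log_neg hr0 hr1), ← Real.log_rpow hr0] at h
  exact (Real.log_le_log_iff hm (by positivity)).1 h

lemma rpow_le_of_log_div_log_le {m r b : ℝ} (hm : 0 < m) (hr0 : 0 < r) (hr1 : r < 1)
    (h : Real.log m / Real.log r ≤ b) : r ^ b ≤ m := by
  rw [div_le_iff_of_neg (Real.log_neg hr0 hr1), ← Real.log_rpow hr0] at h
  exact (Real.log_le_log_iff (by positivity) hm).1 h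

lemma summable_half_pow_rpow_div {s t : ℝ} (hts : t < s) :
    Summable fun k : ℕ => ((2⁻¹ : ℝ) ^ k) ^ s / ((2⁻¹ : ℝ) ^ (k + 1)) ^ t := by
  have h2 : (0 : ℝ) ≤ 2⁻¹ := by norm_num
  have hq : (2⁻¹ : ℝ) ^ (s - t) < 1 := Real.rpow_lt_one h2 (by norm_num) (by linarith)
  refine ((summable_geometric_of_lt_one (by positivity) hq).mul_left
    ((2⁻¹ : ℝ) ^ (-t))).congr fun k => ?_
  rw [← Real.rpow_pow_comm h2, ← Real.rpow_pow_comm h2, Real.rpow_sub (by norm_num),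
    Real.rpow_neg h2, pow_succ, div_pow]
  have : (0 : ℝ) < (2⁻¹ : ℝ) ^ t := by positivity
  field_simp

lemma tsum_ofReal_half_pow_rpow_div_ne_top {s t : ℝ} (hts : t < s) :
    ∑' k : ℕ, ENNReal.ofReal (((2⁻¹ : ℝ) ^ k) ^ s / ((2⁻¹ : ℝ) ^ (k + 1)) ^ t) ≠ ⊤ := by
  rw [← ENNReal.ofReal_tsum_of_nonneg (fun k => by positivity) (summable_half_pow_rpow_div hts)]
  exact ENNReal.ofReal_ne_top

lemma le_measure_compl_inter_of_add_le_measure {α : Type*} [MeasurableSpace α] (μ : Measure α)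
    {F B : Set α} {θ : ℝ≥0∞} (hθ : θ ≠ ⊤) (hB : θ + θ ≤ μ B) (hF : μ (F ∩ B) ≤ θ) :
    θ ≤ μ (Fᶜ ∩ B) := by
  refine (ENNReal.add_le_add_iff_left hθ).1 (hB.trans ?_)
  calc μ B ≤ μ (F ∩ B) + μ (Fᶜ ∩ B) := by
        rw [inter_comm F, ← sdiff_eq_compl_inter]
        exact measure_le_inter_add_sdiff μ B F
    _ ≤ θ + μ (Fᶜ ∩ B) := by gcongr

section Potential

variable {X : Type*} [MetricSpace X]

lemma edist_rpow_neg_le_one_add_tsum {t : ℝ} (ht : 0 < t) (x y : X) :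
    edist x y ^ (-t) ≤ 1 + ∑' k : ℕ, (closedBall x ((2⁻¹ : ℝ) ^ k)).indicator
      (fun _ => (ENNReal.ofReal (((2⁻¹ : ℝ) ^ (k + 1)) ^ t))⁻¹) y := by
  rcases (dist_nonneg : 0 ≤ dist x y).eq_or_lt with h0 | hpos
  · obtain rfl : x = y := dist_eq_zero.1 h0.symm
    have hterm (k : ℕ) : (1 : ℝ≥0∞) ≤ (closedBall x ((2⁻¹ : ℝ) ^ k)).indicator
        (fun _ => (ENNReal.ofReal (((2⁻¹ : ℝ) ^ (k + 1)) ^ t))⁻¹) x := by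
      rw [indicator_of_mem (mem_closedBall_self (by positivity)), ENNReal.one_le_inv]
      exact ENNReal.ofReal_le_one.2 (Real.rpow_le_one (by positivity)
        (pow_le_one₀ (by norm_num) (by norm_num)) ht.le)
    calc edist x x ^ (-t) ≤ ∑' _ : ℕ, (1 : ℝ≥0∞) := by
          rw [ENNReal.tsum_const_eq_top_of_ne_zero one_ne_zero]; exact le_top
      _ ≤ _ := le_add_left (ENNReal.tsum_le_tsum hterm)
  rcases le_or_gt 1 (dist x y) with h1 | h1
  · refine le_add_right (ENNReal.rpow_le_one_of_one_le_of_neg ?_ (neg_lt_zero.2 ht))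
    rw [edist_dist]
    exact ENNReal.one_le_ofReal.2 h1
  obtain ⟨k, hk1, hk⟩ :=
    exists_nat_pow_near_of_lt_one hpos h1.le (by norm_num : (0 : ℝ) < 2⁻¹) (by norm_num)
  refine le_add_left (le_trans ?_ (ENNReal.le_tsum k))
  rw [indicator_of_mem (mem_closedBall'.2 hk), edist_dist, ENNReal.rpow_neg,
    ENNReal.ofReal_rpow_of_nonneg hpos.le ht.le]
  exact ENNReal.inv_le_inv.2 (ENNReal.ofReal_le_ofReal
    (Real.rpow_le_rpow (by positivity) hk1.le ht.le))

variable [MeasurableSpace X] [OpensMeasurableSpace X]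

lemma potential_le_of_measure_closedBall_le (ν : Measure X) {x : X} {s t : ℝ} {K : ℝ≥0∞}
    (ht : 0 < t) (hK : ∀ r > 0, ν (closedBall x r) ≤ K * ENNReal.ofReal (r ^ s)) :
    potential ν t x ≤ ν univ + K * ∑' k : ℕ,
      ENNReal.ofReal (((2⁻¹ : ℝ) ^ k) ^ s / ((2⁻¹ : ℝ) ^ (k + 1)) ^ t) := by
  calc potential ν t x
      ≤ ∫⁻ y, 1 + ∑' k : ℕ, (closedBall x ((2⁻¹ : ℝ) ^ k)).indicator
          (fun _ => (ENNReal.ofReal (((2⁻¹ : ℝ) ^ (k + 1)) ^ t))⁻¹) y ∂ν :=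
        lintegral_mono fun y => edist_rpow_neg_le_one_add_tsum ht x y
    _ = ν univ + ∑' k : ℕ, (ENNReal.ofReal (((2⁻¹ : ℝ) ^ (k + 1)) ^ t))⁻¹ *
          ν (closedBall x ((2⁻¹ : ℝ) ^ k)) := by
        rw [lintegral_add_left measurable_const, lintegral_const, one_mul, lintegral_tsum fun k =>
          (measurable_const.indicator measurableSet_closedBall).aemeasurable]
        simp_rw [lintegral_indicator_const measurableSet_closedBall]
    _ ≤ ν univ + ∑' k : ℕ,
          K * ENNReal.ofReal (((2⁻¹ : ℝ) ^ k) ^ s / ((2⁻¹ : ℝ) ^ (k + 1)) ^ t) := by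
        refine add_le_add_right (ENNReal.tsum_le_tsum fun k => ?_) _
        calc _ ≤ (ENNReal.ofReal (((2⁻¹ : ℝ) ^ (k + 1)) ^ t))⁻¹ *
              (K * ENNReal.ofReal (((2⁻¹ : ℝ) ^ k) ^ s)) := by
              gcongr; exact hK _ (by positivity)
          _ = _ := by
              rw [ENNReal.ofReal_div_of_pos (by positivity), div_eq_mul_inv]; ring
    _ = _ := by rw [ENNReal.tsum_mul_left]

lemma measure_closedBall_le_mul_potential (ν : Measure X) (x : X) {t u : ℝ} (ht : 0 ≤ t)
    (hu : 0 < u) : ν (closedBall x u) ≤ ENNReal.ofReal (u ^ t) * potential ν t x := by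
  have hu' : ENNReal.ofReal (u ^ t) ≠ 0 := (ENNReal.ofReal_pos.2 (by positivity)).ne'
  rw [mul_comm, ← ENNReal.div_le_iff_le_mul (Or.inl hu') (Or.inl ENNReal.ofReal_ne_top),
    div_eq_mul_inv, mul_comm, ← setLIntegral_const]
  refine (setLIntegral_mono' measurableSet_closedBall fun y hy => ?_).trans
    (setLIntegral_le_lintegral _ _)
  rw [ENNReal.rpow_neg, ← ENNReal.ofReal_rpow_of_nonneg hu.le ht]
  have hyx : edist x y ≤ ENNReal.ofReal u := by
    rw [edist_dist, dist_comm]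
    exact ENNReal.ofReal_le_ofReal (mem_closedBall.1 hy)
  exact ENNReal.inv_le_inv.2 (ENNReal.rpow_le_rpow hyx ht)

lemma measure_inter_closedBall_le_of_potential_le (μ : Measure X) (A : Set X) {t : ℝ}
    (ht : 0 ≤ t) {C : ℝ≥0∞} (y : X) {ρ : ℝ} (hρ : 0 < ρ) :
    μ (A ∩ {x | potential (μ.restrict A) t x ≤ C} ∩ closedBall y ρ) ≤
      C * ENNReal.ofReal (2 ^ t) * ENNReal.ofReal (ρ ^ t) := by
  rcases (A ∩ {x | potential (μ.restrict A) t x ≤ C} ∩ closedBall y ρ).eq_empty_or_nonempty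
    with h | ⟨x, ⟨-, hxC⟩, hxy⟩
  · simp [h]
  calc μ (A ∩ {x | potential (μ.restrict A) t x ≤ C} ∩ closedBall y ρ)
      ≤ μ.restrict A (closedBall x (2 * ρ)) := by
        rw [Measure.restrict_apply measurableSet_closedBall]
        refine measure_mono fun z ⟨⟨hzA, _⟩, hz⟩ => ⟨mem_closedBall.2 ?_, hzA⟩
        linarith [dist_triangle_right z x y, mem_closedBall.1 hz, mem_closedBall.1 hxy]
    _ ≤ ENNReal.ofReal ((2 * ρ) ^ t) * potential (μ.restrict A) t x :=
        measure_closedBall_le_mul_potential _ x ht (by positivity)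
    _ ≤ ENNReal.ofReal ((2 * ρ) ^ t) * C := by gcongr; exact hxC
    _ = C * ENNReal.ofReal (2 ^ t) * ENNReal.ofReal (ρ ^ t) := by
        rw [Real.mul_rpow (by norm_num) hρ.le, ENNReal.ofReal_mul (by positivity)]
        ring

end Potential

section LocalDimension

variable {X : Type*} [MetricSpace X] [MeasurableSpace X] {μ : Measure X}

lemma ae_lt_lowerLocalDim {s : ℝ} (hs : 0 ≤ s) (h : s < lowerHausdorffDim μ) :
    ∀ᵐ x ∂μ, s < lowerLocalDim μ x :=
  eventually_lt_of_nonneg_of_lt_liminf hs h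

variable [IsFiniteMeasure μ] {x : X}

lemma eventually_measure_closedBall_le_rpow {s : ℝ} (hs : 0 ≤ s) (h : s < lowerLocalDim μ x) :
    ∀ᶠ r in 𝓝[>] 0, μ (closedBall x r) ≤ ENNReal.ofReal (r ^ s) := by
  filter_upwards [eventually_lt_of_nonneg_of_lt_liminf hs h, Ioo_mem_nhdsGT one_pos]
    with r hr hr01
  rw [← ENNReal.ofReal_toReal (measure_ne_top μ _)]
  exact ENNReal.ofReal_le_ofReal
    (le_rpow_of_le_log_div_log ENNReal.toReal_nonneg hr01.1 hr01.2 hr.le)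

lemma frequently_rpow_le_measure_closedBall {b : ℝ} (h0 : 0 < lowerLocalDim μ x)
    (hb : lowerLocalDim μ x < b) :
    ∃ᶠ r in 𝓝[>] 0, ENNReal.ofReal (r ^ b) ≤ μ (closedBall x r) := by
  refine ((frequently_lt_of_liminf_lt_of_pos h0 hb).and_eventually
    ((eventually_lt_of_nonneg_of_lt_liminf le_rfl h0).and (Ioo_mem_nhdsGT one_pos))).mono ?_
  rintro r ⟨hrb, hr0, hr01⟩
  -- a null ball would make the ratio `log 0 / log r = 0`
  have hm : 0 < (μ (closedBall x r)).toReal := by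
    refine ENNReal.toReal_nonneg.lt_of_ne fun h => ?_
    rw [← h, Real.log_zero, zero_div] at hr0
    exact lt_irrefl _ hr0
  rw [← ENNReal.ofReal_toReal (measure_ne_top μ _)]
  exact ENNReal.ofReal_le_ofReal (rpow_le_of_log_div_log_le hm hr01.1 hr01.2 hrb.le)

end LocalDimension

section Frostman

variable {X : Type*} [MetricSpace X] [MeasurableSpace X]

def frostmanSet (μ : Measure X) (s : ℝ) (K : ℝ≥0) : Set X :=
  {x | ∀ r > 0, μ (closedBall x r) ≤ K * ENNReal.ofReal (r ^ s)}

lemma frostmanSet_mono (μ : Measure X) (s : ℝ) : Monotone (frostmanSet μ s) :=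
  fun _ _ hKK' _ hx r hr => (hx r hr).trans (by gcongr)

lemma isClosed_frostmanSet (μ : Measure X) (s : ℝ) (K : ℝ≥0) : IsClosed (frostmanSet μ s K) := by
  refine isClosed_of_closure_subset fun x hx r hr => ?_
  have hcont : ContinuousAt (fun η : ℝ => ENNReal.ofReal ((r + η) ^ s)) 0 :=
    ENNReal.continuous_ofReal.continuousAt.comp
      ((continuousAt_const.add continuousAt_id).rpow_const (Or.inl (by simpa using hr.ne')))
  have hlim : Tendsto (fun η : ℝ => (K : ℝ≥0∞) * ENNReal.ofReal ((r + η) ^ s)) (𝓝[>] 0)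
      (𝓝 (K * ENNReal.ofReal (r ^ s))) := by
    simpa using ENNReal.Tendsto.const_mul (hcont.tendsto.mono_left nhdsWithin_le_nhds)
      (Or.inr ENNReal.coe_ne_top)
  refine ge_of_tendsto hlim (eventually_nhdsWithin_of_forall fun η (hη : 0 < η) => ?_)
  obtain ⟨x', hx', hxx'⟩ := Metric.mem_closure_iff.1 hx η hη
  exact (measure_mono (closedBall_subset_closedBall' (by linarith))).trans
    (hx' _ (by linarith [dist_nonneg (x := x) (y := x')]))

lemma exists_nat_mem_frostmanSet {μ : Measure X} [IsFiniteMeasure μ] {x : X} {s : ℝ} (hs : 0 ≤ s)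
    (h : s < lowerLocalDim μ x) : ∃ n : ℕ, x ∈ frostmanSet μ s n := by
  obtain ⟨δ, hδ : 0 < δ, hball⟩ :=
    mem_nhdsGT_iff_exists_Ioo_subset.1 (eventually_measure_closedBall_le_rpow hs h)
  have hδs : ENNReal.ofReal (δ ^ s) ≠ 0 := (ENNReal.ofReal_pos.2 (by positivity)).ne'
  obtain ⟨n, hn⟩ := ENNReal.exists_nat_gt
    (ENNReal.add_ne_top.2 ⟨ENNReal.div_ne_top (measure_ne_top μ univ) hδs, ENNReal.one_ne_top⟩)
  refine ⟨n, fun r hr => ?_⟩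
  rw [ENNReal.coe_natCast]
  rcases lt_or_ge r δ with hrδ | hrδ
  · calc μ (closedBall x r) ≤ ENNReal.ofReal (r ^ s) := hball ⟨hr, hrδ⟩
      _ ≤ n * ENNReal.ofReal (r ^ s) := le_mul_of_one_le_left' (le_add_self.trans hn.le)
  · calc μ (closedBall x r) ≤ μ univ := measure_mono (subset_univ _)
      _ = μ univ / ENNReal.ofReal (δ ^ s) * ENNReal.ofReal (δ ^ s) :=
        (ENNReal.div_mul_cancel hδs ENNReal.ofReal_ne_top).symm
      _ ≤ n * ENNReal.ofReal (r ^ s) := by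
        gcongr
        exact le_self_add.trans hn.le

variable [OpensMeasurableSpace X] {μ : Measure X} [IsFiniteMeasure μ]

lemma exists_measure_compl_frostmanSet_lt {s : ℝ} (hs : 0 ≤ s)
    (h : ∀ᵐ x ∂μ, s < lowerLocalDim μ x) {η : ℝ≥0∞} (hη : η ≠ 0) :
    ∃ K : ℕ, μ (frostmanSet μ s K)ᶜ < η := by
  have hnull : μ (⋂ n : ℕ, (frostmanSet μ s n)ᶜ) = 0 := by
    rw [← compl_iUnion]
    exact mem_ae_iff.1 (h.mono fun x hx => mem_iUnion.2 (exists_nat_mem_frostmanSet hs hx))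
  have hlim := tendsto_measure_iInter_atTop
    (fun n : ℕ => (isClosed_frostmanSet μ s n).measurableSet.compl.nullMeasurableSet)
    (fun m n hmn => compl_subset_compl.2 (frostmanSet_mono μ s (by exact_mod_cast hmn)))
    ⟨0, measure_ne_top μ _⟩
  rw [hnull] at hlim
  exact (hlim.eventually (gt_mem_nhds (pos_iff_ne_zero.2 hη))).exists

lemma energy_restrict_lt_top_of_subset_frostmanSet {A : Set X} {s t : ℝ} {K : ℝ≥0}
    (hA : MeasurableSet A) (hAK : A ⊆ frostmanSet μ s K) (ht : 0 < t) (hts : t < s) :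
    energy (μ.restrict A) t < ⊤ := by
  set M := μ.restrict A univ + K * ∑' k : ℕ,
    ENNReal.ofReal (((2⁻¹ : ℝ) ^ k) ^ s / ((2⁻¹ : ℝ) ^ (k + 1)) ^ t)
  have hM : M ≠ ⊤ := ENNReal.add_ne_top.2 ⟨measure_ne_top _ _,
    ENNReal.mul_ne_top ENNReal.coe_ne_top (tsum_ofReal_half_pow_rpow_div_ne_top hts)⟩
  calc energy (μ.restrict A) t = ∫⁻ x in A, potential (μ.restrict A) t x ∂μ := rfl
    _ ≤ ∫⁻ _ in A, M ∂μ := setLIntegral_mono' hA fun x hx =>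
        potential_le_of_measure_closedBall_le _ ht fun r hr =>
          (Measure.restrict_apply_le _ _).trans (hAK hx r hr)
    _ < ⊤ := by
      rw [setLIntegral_const]
      exact ENNReal.mul_lt_top hM.lt_top (measure_lt_top μ A)

lemma exists_isClosed_measure_compl_lt_forall_energy_lt_top (hD : 0 < lowerHausdorffDim μ)
    {η : ℝ≥0∞} (hη : η ≠ 0) : ∃ A, IsClosed A ∧ μ Aᶜ < η ∧
      ∀ t ∈ Ioo 0 (lowerHausdorffDim μ), energy (μ.restrict A) t < ⊤ := by
  obtain ⟨u, -, hu, hlim⟩ := exists_seq_strictMono_tendsto' hD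
  obtain ⟨η', hη'0, hη'⟩ := ENNReal.exists_pos_sum_of_countable hη ℕ
  choose K hK using fun n => exists_measure_compl_frostmanSet_lt (hu n).1.le
    (ae_lt_lowerLocalDim (hu n).1.le (hu n).2) (ENNReal.coe_ne_zero.2 (hη'0 n).ne')
  refine ⟨⋂ n, frostmanSet μ (u n) (K n), isClosed_iInter fun n => isClosed_frostmanSet _ _ _,
    ?_, fun t ht => ?_⟩
  · calc μ (⋂ n, frostmanSet μ (u n) (K n))ᶜ = μ (⋃ n, (frostmanSet μ (u n) (K n))ᶜ) := by
          rw [compl_iInter]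
      _ ≤ ∑' n, μ (frostmanSet μ (u n) (K n))ᶜ := measure_iUnion_le _
      _ ≤ ∑' n, (η' n : ℝ≥0∞) := ENNReal.tsum_le_tsum fun n => (hK n).le
      _ < η := hη'
  · obtain ⟨n, hn⟩ := (hlim.eventually (lt_mem_nhds ht.2)).exists
    exact energy_restrict_lt_top_of_subset_frostmanSet
      (MeasurableSet.iInter fun n => (isClosed_frostmanSet _ _ _).measurableSet)
      (iInter_subset _ n) ht.1 hn

end Frostman

section HeavyPoints

variable {X : Type*} [MetricSpace X] [MeasurableSpace X]

def heavyDyadicPoints (μ : Measure X) (b : ℝ) : Set X :=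
  {x | ∃ᶠ k in atTop,
    ENNReal.ofReal (((2⁻¹ : ℝ) ^ (k + 1)) ^ b) ≤ μ (closedBall x ((2⁻¹ : ℝ) ^ k))}

lemma mem_heavyDyadicPoints_of_frequently {μ : Measure X} {x : X} {b : ℝ} (hb : 0 ≤ b)
    (h : ∃ᶠ r in 𝓝[>] 0, ENNReal.ofReal (r ^ b) ≤ μ (closedBall x r)) :
    x ∈ heavyDyadicPoints μ b := by
  refine frequently_atTop.2 fun N => ?_
  obtain ⟨r, hr, hr0, hrN⟩ :=
    (h.and_eventually (Ioo_mem_nhdsGT (by positivity : (0 : ℝ) < 2⁻¹ ^ N))).exists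
  obtain ⟨k, hk1, hk⟩ := exists_nat_pow_near_of_lt_one hr0
    (hrN.le.trans (pow_le_one₀ (by norm_num) (by norm_num))) (by norm_num : (0 : ℝ) < 2⁻¹)
    (by norm_num)
  refine ⟨k, ?_, ?_⟩
  · have := (pow_lt_pow_iff_right_of_lt_one₀ (by norm_num : (0 : ℝ) < 2⁻¹) (by norm_num)).1
      (hk1.trans hrN)
    omega
  · calc ENNReal.ofReal (((2⁻¹ : ℝ) ^ (k + 1)) ^ b) ≤ ENNReal.ofReal (r ^ b) :=
          ENNReal.ofReal_le_ofReal (Real.rpow_le_rpow (by positivity) hk1.le hb)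
      _ ≤ μ (closedBall x r) := hr
      _ ≤ μ (closedBall x ((2⁻¹ : ℝ) ^ k)) := measure_mono (closedBall_subset_closedBall hk)

lemma exists_nat_mem_heavyDyadicPoints {μ : Measure X} [IsFiniteMeasure μ] {x : X}
    (h0 : 0 < lowerLocalDim μ x) : ∃ b : ℕ, x ∈ heavyDyadicPoints μ b := by
  obtain ⟨b, hb⟩ := exists_nat_gt (lowerLocalDim μ x)
  exact ⟨b, mem_heavyDyadicPoints_of_frequently (Nat.cast_nonneg b)
    (frequently_rpow_le_measure_closedBall h0 hb)⟩

end HeavyPoints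

section ProductMeasurability

variable {X : Type*} [MetricSpace X] [MeasurableSpace X] [SecondCountableTopology X]
  [OpensMeasurableSpace X] (μ : Measure X)

lemma measurable_potential [SFinite μ] (t : ℝ) : Measurable (potential μ t) :=
  Measurable.lintegral_prod_right'
    (ENNReal.continuous_rpow_const.comp continuous_edist).measurable

lemma measurable_measure_inter_closedBall [SFinite μ] {G : Set X} (hG : MeasurableSet G)
    (ρ : ℝ) : Measurable fun x => μ (G ∩ closedBall x ρ) :=
  measurable_measure_prodMk_left (s := {p : X × X | p.2 ∈ G ∧ dist p.2 p.1 ≤ ρ})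
    ((measurable_snd hG).inter
      (isClosed_le (continuous_snd.dist continuous_fst) continuous_const).measurableSet)

lemma measurableSet_setOf_dist_le {F G : Set X} (hF : MeasurableSet F) (hG : MeasurableSet G)
    (ρ : ℝ) : MeasurableSet {p : X × X | p.1 ∈ F ∧ p.2 ∈ G ∧ dist p.2 p.1 ≤ ρ} :=
  (measurable_fst hF).inter ((measurable_snd hG).inter
    (isClosed_le (continuous_snd.dist continuous_fst) continuous_const).measurableSet)

lemma prod_setOf_dist_le_eq_setLIntegral [SFinite μ] {F G : Set X} (hF : MeasurableSet F)
    (hG : MeasurableSet G) (ρ : ℝ) :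
    μ.prod μ {p : X × X | p.1 ∈ F ∧ p.2 ∈ G ∧ dist p.2 p.1 ≤ ρ} =
      ∫⁻ x in F, μ (G ∩ closedBall x ρ) ∂μ := by
  rw [Measure.prod_apply (measurableSet_setOf_dist_le hF hG ρ), ← lintegral_indicator hF]
  congr 1
  funext x
  by_cases hx : x ∈ F
  · rw [indicator_of_mem hx]
    congr 1
    ext y
    simp [hx]
  · simp [hx]

lemma setLIntegral_measure_inter_closedBall_comm [SFinite μ] {F G : Set X}
    (hF : MeasurableSet F) (hG : MeasurableSet G) (ρ : ℝ) :
    ∫⁻ x in F, μ (G ∩ closedBall x ρ) ∂μ = ∫⁻ y in G, μ (F ∩ closedBall y ρ) ∂μ := by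
  rw [← prod_setOf_dist_le_eq_setLIntegral μ hF hG, ← prod_setOf_dist_le_eq_setLIntegral μ hG hF]
  conv_rhs => rw [← Measure.prod_swap, Measure.map_apply measurable_swap
    (measurableSet_setOf_dist_le hG hF ρ)]
  congr 1
  ext ⟨x, y⟩
  simp [dist_comm, and_left_comm]

end ProductMeasurability

section InfiniteEnergy

variable {X : Type*} [MetricSpace X] [MeasurableSpace X] [SecondCountableTopology X]
  [OpensMeasurableSpace X] (μ : Measure X)

lemma measure_setOf_le_measure_compl_inter_closedBall_le [SFinite μ] {F : Set X} {ρ : ℝ}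
    {c θ : ℝ≥0∞} (hF : MeasurableSet F) (hθ0 : θ ≠ 0) (hθ : θ ≠ ⊤)
    (hball : ∀ y, μ (F ∩ closedBall y ρ) ≤ c) :
    μ ({x | θ ≤ μ (Fᶜ ∩ closedBall x ρ)} ∩ F) ≤ μ Fᶜ * c / θ := by
  rw [← Measure.restrict_apply' hF]
  refine (meas_ge_le_lintegral_div
    (measurable_measure_inter_closedBall μ hF.compl ρ).aemeasurable hθ0 hθ).trans ?_
  gcongr
  calc ∫⁻ x in F, μ (Fᶜ ∩ closedBall x ρ) ∂μ = ∫⁻ y in Fᶜ, μ (F ∩ closedBall y ρ) ∂μ :=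
        setLIntegral_measure_inter_closedBall_comm μ hF hF.compl ρ
    _ ≤ ∫⁻ _ in Fᶜ, c ∂μ := setLIntegral_mono' hF.compl fun y _ => hball y
    _ = μ Fᶜ * c := by rw [setLIntegral_const, mul_comm]

lemma measure_inter_setOf_frequently_le_measure_closedBall_eq_zero [IsFiniteMeasure μ]
    {F : Set X} {ρ : ℕ → ℝ} {θ c : ℕ → ℝ≥0∞} (hF : MeasurableSet F) (hθ0 : ∀ k, θ k ≠ 0)
    (hθ : ∀ k, θ k ≠ ⊤) (hball : ∀ k y, μ (F ∩ closedBall y (ρ k)) ≤ c k)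
    (hsum : ∑' k, c k / θ k ≠ ⊤) :
    μ (F ∩ {x | ∃ᶠ k in atTop, θ k + θ k ≤ μ (closedBall x (ρ k))}) = 0 := by
  set W : ℕ → Set X := fun k => {x | θ k ≤ μ (Fᶜ ∩ closedBall x (ρ k))} ∩ F
  have hW_sum : ∑' k, μ (W k) ≠ ⊤ := by
    refine ne_top_of_le_ne_top ?_ (ENNReal.tsum_le_tsum fun k =>
      measure_setOf_le_measure_compl_inter_closedBall_le μ hF (hθ0 k) (hθ k) (hball k))
    simp_rw [mul_div_assoc, ENNReal.tsum_mul_left]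
    exact ENNReal.mul_ne_top (measure_ne_top _ _) hsum
  have hsmall : ∀ᶠ k in atTop, c k ≤ θ k := by
    refine ((ENNReal.tendsto_atTop_zero_of_tsum_ne_top hsum).eventually
      (gt_mem_nhds one_pos)).mono fun k hk => ?_
    simpa using (ENNReal.div_le_iff (hθ0 k) (hθ k)).1 hk.le
  refine measure_mono_null (fun x ⟨hxF, hx⟩ => ?_) (measure_limsup_atTop_eq_zero hW_sum)
  rw [mem_limsup_iff_frequently_mem]
  exact (hx.and_eventually hsmall).mono fun k ⟨hheavy, hk⟩ =>
    ⟨le_measure_compl_inter_of_add_le_measure μ (hθ k) hheavy ((hball k x).trans hk), hxF⟩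

lemma measure_inter_heavyDyadicPoints_eq_zero_of_frostman [IsFiniteMeasure μ] {F : Set X}
    {b t : ℝ} {K : ℝ≥0∞} (hF : MeasurableSet F) (hK : K ≠ ⊤) (hbt : b < t)
    (hball : ∀ y, ∀ ρ > 0, μ (F ∩ closedBall y ρ) ≤ K * ENNReal.ofReal (ρ ^ t)) :
    μ (F ∩ heavyDyadicPoints μ b) = 0 := by
  have hθ (k : ℕ) : 0 < ((2⁻¹ : ℝ) ^ (k + 1)) ^ b / 2 := by positivity
  have hsum : Summable fun k : ℕ => ((2⁻¹ : ℝ) ^ k) ^ t / (((2⁻¹ : ℝ) ^ (k + 1)) ^ b / 2) :=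
    ((summable_half_pow_rpow_div hbt).mul_left 2).congr fun k => by field_simp
  refine measure_mono_null ?_
    (measure_inter_setOf_frequently_le_measure_closedBall_eq_zero μ hF
      (ρ := fun k => (2⁻¹ : ℝ) ^ k) (θ := fun k => ENNReal.ofReal (((2⁻¹ : ℝ) ^ (k + 1)) ^ b / 2))
      (fun k => (ENNReal.ofReal_pos.2 (hθ k)).ne') (fun _ => ENNReal.ofReal_ne_top)
      (fun k y => hball y _ (by positivity)) ?_)
  · refine fun x ⟨hxF, hx⟩ => ⟨hxF, hx.mono fun k hk => ?_⟩
    rwa [← ENNReal.ofReal_add (hθ k).le (hθ k).le, add_halves]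
  · simp_rw [mul_div_assoc, ENNReal.tsum_mul_left, ← ENNReal.ofReal_div_of_pos (hθ _),
      ← ENNReal.ofReal_tsum_of_nonneg (fun k => by positivity) hsum]
    exact ENNReal.mul_ne_top hK ENNReal.ofReal_ne_top

lemma measure_inter_heavyDyadicPoints_eq_zero_of_energy_lt_top [IsFiniteMeasure μ] {A : Set X}
    {b t : ℝ} (hA : MeasurableSet A) (ht : 0 ≤ t) (hbt : b < t)
    (hE : energy (μ.restrict A) t < ⊤) : μ (A ∩ heavyDyadicPoints μ b) = 0 := by
  set P := potential (μ.restrict A) t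
  have hP : Measurable P := measurable_potential _ t
  have h_top : μ (A ∩ {x | P x = ⊤}) = 0 := by
    have := ae_iff.1 ((ae_restrict_iff' hA).1 (ae_lt_top hP hE.ne))
    refine measure_mono_null (fun x hx => ?_) this
    exact fun h => (h hx.1).ne hx.2
  have h_fin (C : ℕ) : μ (A ∩ {x | P x ≤ C} ∩ heavyDyadicPoints μ b) = 0 :=
    measure_inter_heavyDyadicPoints_eq_zero_of_frostman μ
      (hA.inter (measurableSet_le hP measurable_const)) (by finiteness) hbt
      fun y _ hρ => measure_inter_closedBall_le_of_potential_le μ A ht y hρ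
  refine measure_mono_null (fun x ⟨hxA, hxb⟩ => ?_)
    (measure_union_null h_top (measure_iUnion_null h_fin))
  rcases eq_or_ne (P x) ⊤ with h | h
  · exact Or.inl ⟨hxA, h⟩
  · obtain ⟨C, hC⟩ := ENNReal.exists_nat_gt h
    exact Or.inr (mem_iUnion.2 ⟨C, ⟨hxA, hC.le⟩, hxb⟩)

lemma bddAbove_setOf_energy_restrict_lt_top [IsFiniteMeasure μ] {A : Set X}
    (hD : 0 < lowerHausdorffDim μ) (hA : MeasurableSet A) (hA0 : μ A ≠ 0) :
    BddAbove {t | energy (μ.restrict A) t < ⊤} := by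
  have hae : ∀ᵐ x ∂μ, ∃ b : ℕ, x ∈ heavyDyadicPoints μ b :=
    (ae_lt_lowerLocalDim le_rfl hD).mono fun x hx => exists_nat_mem_heavyDyadicPoints hx
  obtain ⟨b, hb⟩ : ∃ b : ℕ, μ (A ∩ heavyDyadicPoints μ b) ≠ 0 := by
    by_contra! h
    refine hA0 (measure_mono_null (fun x hxA => ?_)
      (measure_union_null (measure_iUnion_null h) (ae_iff.1 hae)))
    by_cases hx : ∃ b : ℕ, x ∈ heavyDyadicPoints μ b
    · obtain ⟨b, hb⟩ := hx
      exact Or.inl (mem_iUnion.2 ⟨b, hxA, hb⟩)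
    · exact Or.inr hx
  refine ⟨b, fun t ht => le_of_not_gt fun hbt => hb ?_⟩
  exact measure_inter_heavyDyadicPoints_eq_zero_of_energy_lt_top μ hA
    ((Nat.cast_nonneg b).trans hbt.le) hbt ht

end InfiniteEnergy

section CorrelationDimension

variable {X : Type*} [MetricSpace X] [MeasurableSpace X] (ν : Measure X)

lemma corrDim_nonneg [IsFiniteMeasure ν] : 0 ≤ corrDim ν := by
  have h0 : energy ν 0 < ⊤ := by
    simpa [energy] using ENNReal.mul_lt_top (measure_lt_top ν univ) (measure_lt_top ν univ)
  by_cases hbdd : BddAbove {s | energy ν s < ⊤}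
  · exact le_csSup hbdd h0
  · rw [corrDim, Real.sSup_of_not_bddAbove hbdd]

lemma le_corrDim_of_forall_energy_lt_top {D : ℝ} (hD : 0 < D)
    (hE : ∀ t ∈ Ioo 0 D, energy ν t < ⊤) (hbdd : BddAbove {t | energy ν t < ⊤}) :
    D ≤ corrDim ν :=
  (csSup_Ioo hD).symm.le.trans (csSup_le_csSup hbdd (nonempty_Ioo.2 hD) hE)

lemma lowerHausdorffDim_zero : lowerHausdorffDim (0 : Measure X) = 0 := by
  rw [lowerHausdorffDim, essInf, ae_zero]
  refine Real.liminf_of_not_isCoboundedUnder fun ⟨b, hb⟩ => ?_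
  linarith [hb (b + 1) (by simp)]

end CorrelationDimension

theorem exists_compact_corrDim_ge_lowerHausdorffDim_general {X : Type*} [MetricSpace X]
    [CompactSpace X] [MeasurableSpace X] [BorelSpace X]
    (μ : Measure X) [IsFiniteMeasure μ] (ε : ℝ) (hε : 0 < ε) :
    ∃ A : Set X, IsCompact A ∧ μ Aᶜ < ENNReal.ofReal ε ∧
      lowerHausdorffDim μ ≤ corrDim (μ.restrict A) := by
  rcases le_or_gt (lowerHausdorffDim μ) 0 with hD | hD
  · exact ⟨univ, isCompact_univ, by simpa using hε, hD.trans (corrDim_nonneg _)⟩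
  have hμ : μ univ ≠ 0 := fun h => by
    rw [Measure.measure_univ_eq_zero.1 h, lowerHausdorffDim_zero] at hD
    exact lt_irrefl _ hD
  obtain ⟨A, hA, hAη, hE⟩ := exists_isClosed_measure_compl_lt_forall_energy_lt_top hD
    (η := min (ENNReal.ofReal ε) (μ univ)) (by simp [hε, hμ])
  have hA0 : μ A ≠ 0 := fun h => (hAη.trans_le (min_le_right _ _)).ne <| by
    rw [measure_compl hA.measurableSet (measure_ne_top μ A), h, tsub_zero]
  exact ⟨A, hA.isCompact, hAη.trans_le (min_le_left _ _), le_corrDim_of_forall_energy_lt_top _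
    hD hE (bddAbove_setOf_energy_restrict_lt_top μ hD hA.measurableSet hA0)⟩

theorem exists_compact_corrDim_ge_lowerHausdorffDim {X : Type*} [MetricSpace X]
    [CompactSpace X] [MeasurableSpace X] [BorelSpace X]
    (μ : Measure X) [IsFiniteMeasure μ] [μ.Regular] (ε : ℝ) (hε : 0 < ε) :
    ∃ A : Set X, IsCompact A ∧ μ Aᶜ < ENNReal.ofReal ε ∧
      lowerHausdorffDim μ ≤ corrDim (μ.restrict A) :=
  exists_compact_corrDim_ge_lowerHausdorffDim_general μ ε hε
end

section
/- Let X and Y be complete separable metric spaces, f : Y → X continuous, μ a locally finite Borel measure with compact support on Y, and A ⊂ Y with μ(A) > 0. Then for μ-almost every y ∈ A, the lower local dimension of the pushforward fμ at f(y) equals the lower local dimension of f(μ|_A) at f(y). -/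
open MeasureTheory Filter Metric Set Topology
open scoped ENNReal

/-!
Since `(μ|_A).map f ≤ μ.map f`, it suffices to show that for finite measures `ν ≤ m` on a
separable metric space the lower local dimensions of `m` and `ν` agree `ν`-a.e.
The inequality `ν (B(x, r)) ≤ m (B(x, r))` gives one direction. For the other, the Vitali covering
lemma bounds `ν {x | ν (B(x, 5r)) < c * m (B(x, r))} ≤ c * m X`; with `c = r ^ δ` along dyadic
radii these bounds are summable, so by Borel–Cantelli `r ^ δ * m (B(x, r)) ≤ ν (B(x, 10r))` for all
small `r`, for `ν`-a.e. `x` and every `δ > 0`. Taking logarithms, the two lower local dimensions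
then differ by at most `δ`.
-/

/-- Stated through the sets of eventual lower bounds, so that it also covers the junk value `0`
of an unbounded `liminf`. -/
theorem liminf_eq_liminf_of_eventually_le_of_forall_sub {α : Type*} {l : Filter α}
    {u v : α → ℝ} (hu : IsBoundedUnder (· ≥ ·) l u) (huv : u ≤ᶠ[l] v)
    (hvu : ∀ ε > 0, ∀ a, (∀ᶠ x in l, a ≤ v x) → ∀ᶠ x in l, a - ε ≤ u x) :
    liminf u l = liminf v l := by
  set S := {a | ∀ᶠ x in l, a ≤ u x}
  set T := {a | ∀ᶠ x in l, a ≤ v x}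
  have hST : S ⊆ T := fun a ha => by
    filter_upwards [ha, huv] with x hax hx using hax.trans hx
  have hS : S.Nonempty := hu
  rw [liminf_eq, liminf_eq]
  by_cases hT : BddAbove T
  · refine le_antisymm (csSup_le_csSup hT hS hST) (csSup_le (hS.mono hST) fun a ha => ?_)
    refine le_of_forall_pos_le_add fun ε hε => ?_
    have := le_csSup (hT.mono hST) (hvu ε hε a ha)
    linarith
  · have hS' : ¬BddAbove S := by
      rintro ⟨b, hb⟩
      refine hT ⟨b + 1, fun a ha => ?_⟩
      have := hb (hvu 1 one_pos a ha)
      linarith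
    rw [Real.sSup_of_not_bddAbove hT, Real.sSup_of_not_bddAbove hS']

theorem eventually_nhdsGT_zero_le_two_mul_of_eventually_inv_two_pow {α : Type*} [Preorder α]
    {F G : ℝ → α} (hF : MonotoneOn F (Ioi 0)) (hG : Monotone G)
    (h : ∀ᶠ n : ℕ in atTop, F (2⁻¹ ^ n) ≤ G (2⁻¹ ^ n)) :
    ∀ᶠ s in 𝓝[>] 0, F s ≤ G (2 * s) := by
  obtain ⟨N, hN⟩ := eventually_atTop.1 h
  filter_upwards [Ioo_mem_nhdsGT (by positivity : (0 : ℝ) < 2⁻¹ ^ N)] with s ⟨hs0, hsN⟩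
  obtain ⟨n, hn1, hn⟩ := exists_nat_pow_near_of_lt_one hs0
    (hsN.le.trans (pow_le_one₀ (by norm_num) (by norm_num))) (by norm_num)
    (by norm_num : (2⁻¹ : ℝ) < 1)
  have hNn : N ≤ n := by
    by_contra! h
    have : (2⁻¹ : ℝ) ^ N ≤ 2⁻¹ ^ (n + 1) := pow_le_pow_of_le_one (by norm_num) (by norm_num) h
    linarith
  calc F s ≤ F (2⁻¹ ^ n) := hF hs0 (by positivity : (0 : ℝ) < 2⁻¹ ^ n) hn
    _ ≤ G (2⁻¹ ^ n) := hN n hNn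
    _ ≤ G (2 * s) := hG (by rw [pow_succ] at hn1; linarith)

theorem ae_forall_measure_closedBall_pos {X : Type*} [MetricSpace X] [SecondCountableTopology X]
    [MeasurableSpace X] (ν : Measure X) :
    ∀ᵐ x ∂ν, ∀ r > 0, 0 < ν (closedBall x r) := by
  filter_upwards [Measure.support_mem_ae] with x hx r hr
  exact (Measure.mem_support_iff_forall x).1 hx _ (closedBall_mem_nhds x hr)

section Density

variable {X : Type*} [MetricSpace X] [SecondCountableTopology X] [MeasurableSpace X]
  [BorelSpace X]

theorem measure_setOf_measure_closedBall_lt_mul_le (m ν : Measure X) {r : ℝ} (hr : 0 < r)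
    (c : ℝ≥0∞) :
    ν {x | ν (closedBall x (5 * r)) < c * m (closedBall x r)} ≤ c * m univ := by
  set F := {x | ν (closedBall x (5 * r)) < c * m (closedBall x r)}
  obtain ⟨u, huF, hdisj, hcov⟩ :=
    Vitali.exists_disjoint_subfamily_covering_enlargement_closedBall F id (fun _ => r) r
      (fun _ _ => le_rfl) 5 (by norm_num)
  have hu : u.Countable := hdisj.countable_of_nonempty_interior fun x _ =>
    ⟨x, ball_subset_interior_closedBall (mem_ball_self hr)⟩
  have hFu : F ⊆ ⋃ y ∈ u, closedBall y (5 * r) := fun x hx => by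
    obtain ⟨y, hy, hxy⟩ := hcov x hx
    exact mem_biUnion hy (hxy (mem_closedBall_self hr.le))
  calc ν F ≤ ∑' y : u, ν (closedBall y (5 * r)) :=
        (measure_mono hFu).trans (measure_biUnion_le ν hu _)
    _ ≤ ∑' y : u, c * m (closedBall (y : X) r) := ENNReal.tsum_le_tsum fun y => (huF y.2).le
    _ = c * m (⋃ y ∈ u, closedBall (id y) r) := by
      rw [ENNReal.tsum_mul_left, measure_biUnion hu hdisj fun _ _ => measurableSet_closedBall]
      rfl
    _ ≤ c * m univ := by gcongr; exact subset_univ _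

theorem ae_eventually_rpow_mul_measure_closedBall_inv_two_pow_le (m ν : Measure X)
    [IsFiniteMeasure m] {δ : ℝ} (hδ : 0 < δ) :
    ∀ᵐ x ∂ν, ∀ᶠ n : ℕ in atTop, ENNReal.ofReal ((2⁻¹ ^ n : ℝ) ^ δ) * m (closedBall x (2⁻¹ ^ n))
      ≤ ν (closedBall x (5 * 2⁻¹ ^ n)) := by
  set q : ℝ≥0∞ := ENNReal.ofReal ((2⁻¹ : ℝ) ^ δ)
  have hq : q < 1 := ENNReal.ofReal_lt_one.2 (Real.rpow_lt_one (by norm_num) (by norm_num) hδ)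
  have hpow (n : ℕ) : ENNReal.ofReal ((2⁻¹ ^ n : ℝ) ^ δ) = q ^ n := by
    rw [← Real.rpow_pow_comm (by norm_num), ENNReal.ofReal_pow (by positivity)]
  have hsum : ∑' n : ℕ, ν {x | ν (closedBall x (5 * 2⁻¹ ^ n))
      < q ^ n * m (closedBall x (2⁻¹ ^ n))} ≠ ∞ := by
    refine ne_top_of_le_ne_top ?_ (ENNReal.tsum_le_tsum fun n =>
      measure_setOf_measure_closedBall_lt_mul_le m ν (by positivity) (q ^ n))
    rw [ENNReal.tsum_mul_right]
    exact ENNReal.mul_ne_top (tsum_geometric_lt_top.2 hq).ne (measure_ne_top m univ)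
  filter_upwards [ae_eventually_notMem hsum] with x hx
  filter_upwards [hx] with n hn
  rw [hpow]
  exact not_lt.1 hn

theorem ae_forall_eventually_rpow_mul_measure_closedBall_le (m ν : Measure X)
    [IsFiniteMeasure m] :
    ∀ᵐ x ∂ν, ∀ δ : ℝ, 0 < δ → ∀ᶠ s in 𝓝[>] 0,
      ENNReal.ofReal (s ^ δ) * m (closedBall x s) ≤ ν (closedBall x (10 * s)) := by
  -- Countably many exponents `1 / (k + 1)` suffice, as `s ^ δ` decreases in `δ` for `s < 1`.
  have h := ae_all_iff.2 fun k : ℕ =>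
    ae_eventually_rpow_mul_measure_closedBall_inv_two_pow_le m ν (Nat.one_div_pos_of_nat (n := k))
  filter_upwards [h] with x hx δ hδ
  obtain ⟨k, hk⟩ := exists_nat_one_div_lt hδ
  have hdyadic := eventually_nhdsGT_zero_le_two_mul_of_eventually_inv_two_pow
    (F := fun s => ENNReal.ofReal (s ^ (1 / (k + 1 : ℝ))) * m (closedBall x s))
    (G := fun s => ν (closedBall x (5 * s)))
    (fun a ha b _ hab => by
      dsimp only
      gcongr
      exact le_of_lt ha)
    (fun a b hab => measure_mono (closedBall_subset_closedBall (by linarith))) (hx k)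
  filter_upwards [hdyadic, Ioo_mem_nhdsGT one_pos] with s hs ⟨hs0, hs1⟩
  calc ENNReal.ofReal (s ^ δ) * m (closedBall x s)
      ≤ ENNReal.ofReal (s ^ (1 / (k + 1 : ℝ))) * m (closedBall x s) := by
        gcongr ?_ * _
        exact ENNReal.ofReal_le_ofReal <| Real.rpow_le_rpow_of_exponent_ge hs0 hs1.le hk.le
    _ ≤ ν (closedBall x (5 * (2 * s))) := hs
    _ = ν (closedBall x (10 * s)) := by ring_nf

end Density

section LogRatio

variable {X : Type*} [MetricSpace X] [MeasurableSpace X]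

theorem isBoundedUnder_ge_log_measure_closedBall_div_log (m : Measure X) [IsFiniteMeasure m]
    (x : X) :
    IsBoundedUnder (· ≥ ·) (𝓝[>] 0)
      fun r => Real.log (m (closedBall x r)).toReal / Real.log r := by
  have hC := Real.tendsto_log_nhdsGT_zero.const_div_atBot (m univ).toReal
  refine isBoundedUnder_of_eventually_ge (a := -1) ?_
  filter_upwards [hC.eventually (eventually_ge_nhds (by norm_num : (-1 : ℝ) < 0)),
    Ioo_mem_nhdsGT one_pos] with r hr ⟨hr0, hr1⟩
  refine hr.trans (div_le_div_of_nonpos_of_le (Real.log_neg hr0 hr1).le ?_)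
  exact (Real.log_le_self ENNReal.toReal_nonneg).trans
    (ENNReal.toReal_mono (measure_ne_top m univ) (measure_mono (subset_univ _)))

theorem eventually_log_measure_closedBall_div_log_le {m ν : Measure X} [IsFiniteMeasure m]
    (hle : ν ≤ m) {x : X} (hpos : ∀ r > 0, 0 < ν (closedBall x r)) :
    ∀ᶠ r in 𝓝[>] 0, Real.log (m (closedBall x r)).toReal / Real.log r
      ≤ Real.log (ν (closedBall x r)).toReal / Real.log r := by
  filter_upwards [Ioo_mem_nhdsGT one_pos] with r ⟨hr0, hr1⟩
  have hνm := Measure.le_iff'.1 hle (closedBall x r)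
  refine div_le_div_of_nonpos_of_le (Real.log_neg hr0 hr1).le (Real.log_le_log ?_ ?_)
  · exact ENNReal.toReal_pos (hpos r hr0).ne' (ne_top_of_le_ne_top (measure_ne_top m _) hνm)
  · exact ENNReal.toReal_mono (measure_ne_top m _) hνm

theorem eventually_sub_le_log_measure_closedBall_div_log {m ν : Measure X} [IsFiniteMeasure m]
    [IsFiniteMeasure ν] {x : X} (hpos : ∀ r > 0, 0 < m (closedBall x r)) {δ ε a : ℝ}
    (hδε : δ < ε)
    (hdens : ∀ᶠ s in 𝓝[>] 0,
      ENNReal.ofReal (s ^ δ) * m (closedBall x s) ≤ ν (closedBall x (10 * s)))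
    (ha : ∀ᶠ r in 𝓝[>] 0, a ≤ Real.log (ν (closedBall x r)).toReal / Real.log r) :
    ∀ᶠ s in 𝓝[>] 0, a - ε ≤ Real.log (m (closedBall x s)).toReal / Real.log s := by
  have h10 := eventually_nhdsGT_zero_mul_left (by norm_num : (0 : ℝ) < 10) ha
  have hlog10 : ∀ᶠ s in 𝓝[>] 0, δ - ε ≤ a * Real.log 10 / Real.log s :=
    (Real.tendsto_log_nhdsGT_zero.const_div_atBot _).eventually
      (eventually_ge_nhds (by linarith))
  filter_upwards [hdens, h10, hlog10, Ioo_mem_nhdsGT (by norm_num : (0 : ℝ) < 10⁻¹)]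
    with s hs h10s hlog10s ⟨hs0, hs1⟩
  have hms : 0 < (m (closedBall x s)).toReal :=
    ENNReal.toReal_pos (hpos s hs0).ne' (measure_ne_top m _)
  have hsδ : 0 < s ^ δ := Real.rpow_pos_of_pos hs0 δ
  have hlogs : Real.log s < 0 := Real.log_neg hs0 (by linarith)
  have hdens_real : s ^ δ * (m (closedBall x s)).toReal ≤ (ν (closedBall x (10 * s))).toReal := by
    have := ENNReal.toReal_mono (measure_ne_top ν _) hs
    rwa [ENNReal.toReal_mul, ENNReal.toReal_ofReal hsδ.le] at this
  have hν : Real.log (ν (closedBall x (10 * s))).toReal ≤ a * (Real.log 10 + Real.log s) := by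
    rw [← Real.log_mul (by norm_num) hs0.ne']
    exact (le_div_iff_of_neg (Real.log_neg (by positivity) (by linarith))).1 h10s
  have hm : Real.log (m (closedBall x s)).toReal ≤ (a - δ) * Real.log s + a * Real.log 10 := by
    have := Real.log_le_log (by positivity) hdens_real
    rw [Real.log_mul hsδ.ne' hms.ne', Real.log_rpow hs0] at this
    linarith
  calc a - ε ≤ (a - δ) + a * Real.log 10 / Real.log s := by linarith
    _ = ((a - δ) * Real.log s + a * Real.log 10) / Real.log s := by
      rw [add_div, mul_div_cancel_right₀ _ hlogs.ne]
    _ ≤ Real.log (m (closedBall x s)).toReal / Real.log s :=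
      div_le_div_of_nonpos_of_le hlogs.le hm

end LogRatio

theorem ae_lowerLocalDim_eq_of_le {X : Type*} [MetricSpace X] [SecondCountableTopology X]
    [MeasurableSpace X] [BorelSpace X] {m ν : Measure X} [IsFiniteMeasure m] (hle : ν ≤ m) :
    ∀ᵐ x ∂ν, lowerLocalDim m x = lowerLocalDim ν x := by
  have : IsFiniteMeasure ν := isFiniteMeasure_of_le m hle
  filter_upwards [ae_forall_measure_closedBall_pos ν,
    ae_forall_eventually_rpow_mul_measure_closedBall_le m ν] with x hpos hdens
  have hmpos : ∀ r > 0, 0 < m (closedBall x r) := fun r hr =>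
    (hpos r hr).trans_le (Measure.le_iff'.1 hle _)
  exact liminf_eq_liminf_of_eventually_le_of_forall_sub
    (isBoundedUnder_ge_log_measure_closedBall_div_log m x)
    (eventually_log_measure_closedBall_div_log_le hle hpos) fun ε hε a ha =>
    eventually_sub_le_log_measure_closedBall_div_log hmpos (half_lt_self hε)
      (hdens _ (half_pos hε)) ha

theorem lowerLocalDim_map_restrict_general {X Y : Type*}
    [MetricSpace X] [SecondCountableTopology X]
    [MeasurableSpace X] [BorelSpace X]
    [MetricSpace Y]
    [MeasurableSpace Y] [BorelSpace Y]
    (f : Y → X) (hf : Continuous f)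
    (μ : Measure Y) [IsLocallyFiniteMeasure μ]
    (K : Set Y) (hK : IsCompact K) (hKfull : μ Kᶜ = 0)
    (A : Set Y) :
    ∀ᵐ y ∂μ.restrict A,
      lowerLocalDim (μ.map f) (f y) = lowerLocalDim ((μ.restrict A).map f) (f y) := by
  have : IsFiniteMeasure μ :=
    ⟨by rw [← measure_congr (ae_eq_univ.2 hKfull)]; exact hK.measure_lt_top⟩
  exact ae_of_ae_map hf.measurable.aemeasurable
    (ae_lowerLocalDim_eq_of_le (Measure.map_mono Measure.restrict_le_self hf.measurable))

theorem lowerLocalDim_map_restrict {X Y : Type*}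
    [MetricSpace X] [CompleteSpace X] [SecondCountableTopology X]
    [MeasurableSpace X] [BorelSpace X]
    [MetricSpace Y] [CompleteSpace Y] [SecondCountableTopology Y]
    [MeasurableSpace Y] [BorelSpace Y]
    (f : Y → X) (hf : Continuous f)
    (μ : Measure Y) [IsLocallyFiniteMeasure μ]
    (K : Set Y) (hK : IsCompact K) (hKfull : μ Kᶜ = 0)
    (A : Set Y) (hA : 0 < μ A) :
    ∀ᵐ y ∂μ.restrict A,
      lowerLocalDim (μ.map f) (f y) = lowerLocalDim ((μ.restrict A).map f) (f y) :=
  lowerLocalDim_map_restrict_general f hf μ K hK hKfull A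
end

section
/- Let X and Y be complete separable metric spaces, f : Y → X continuous, μ a locally finite Borel measure with compact support on Y, and A ⊂ Y with μ(A) > 0. Then for μ-almost every y ∈ A, the upper local dimension of fμ at f(y) equals the upper local dimension of f(μ|_A) at f(y). -/
open MeasureTheory Filter Metric Set Topology
open scoped ENNReal

/-! If `ρ ≤ ν` are finite measures, `ν(B(x,r)) ≥ ρ(B(x,r))` gives one inequality between the upper
local dimensions at every point. Conversely, Fubini gives `∫ ν(B(x,r)) / ρ(B(x,2r)) dρ(x) ≤ ν(X)`,
so by Markov's inequality and Borel–Cantelli along the radii `2⁻ᵏ`, for `ρ`-a.e. `x` and every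
`ε > 0` eventually `ρ(B(x,r)) ≥ (r/4)^ε ν(B(x,r/4))`, which costs only `ε` in the dimension.
Apply this to `f(μ|_A) ≤ fμ`, finite because `μ` has compact support. -/

namespace Real

/-- No boundedness is assumed: when `T` is empty or unbounded below, so is `S`, and both sides take
the junk value `0`. -/
lemma sInf_eq_sInf_of_subset_of_forall_lt_mem {S T : Set ℝ} (hST : S ⊆ T)
    (hTS : ∀ a ∈ T, ∀ b, a < b → b ∈ S) : sInf S = sInf T := by
  rcases T.eq_empty_or_nonempty with rfl | ⟨a, ha⟩
  · rw [subset_empty_iff.1 hST]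
  by_cases hT : BddBelow T
  · refine le_antisymm (le_of_forall_gt_imp_ge_of_dense fun b hb => ?_)
      (csInf_le_csInf hT ⟨a + 1, hTS a ha _ (lt_add_one a)⟩ hST)
    obtain ⟨c, hc, hcb⟩ := exists_lt_of_csInf_lt ⟨a, ha⟩ hb
    exact csInf_le (hT.mono hST) (hTS c hc b hcb)
  · have hS : ¬BddBelow S := fun ⟨m, hm⟩ =>
      hT ⟨m - 1, fun c hc => by linarith [hm (hTS c hc (c + 1) (lt_add_one c))]⟩
    rw [sInf_of_not_bddBelow hT, sInf_of_not_bddBelow hS]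

lemma limsup_eq_limsup_of_eventually_le {α : Type*} {f g : α → ℝ} {l : Filter α}
    (hfg : f ≤ᶠ[l] g) (hgf : ∀ a b, a < b → (∀ᶠ x in l, f x ≤ a) → ∀ᶠ x in l, g x ≤ b) :
    limsup f l = limsup g l := by
  simp only [limsup_eq]
  refine (sInf_eq_sInf_of_subset_of_forall_lt_mem (fun a ha => ?_)
    fun a ha b hab => hgf a b hab ha).symm
  filter_upwards [hfg, ha] with x h1 h2 using h1.trans h2

lemma log_div_log_le_of_rpow_mul_le {P Q r ε a : ℝ} (hr0 : 0 < r) (hr1 : r < 1) (hQ : 0 < Q)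
    (hQa : log Q / log (r / 4) ≤ a) (hPQ : (r / 4) ^ ε * Q ≤ P) :
    log P / log r ≤ (a + ε) * (log (r / 4) / log r) := by
  have hr4 : log (r / 4) < 0 := log_neg (by positivity) (by linarith)
  have hQ' : a * log (r / 4) ≤ log Q := (div_le_iff_of_neg hr4).1 hQa
  have hP : (a + ε) * log (r / 4) ≤ log P := calc
    (a + ε) * log (r / 4) ≤ ε * log (r / 4) + log Q := by linarith
    _ = log ((r / 4) ^ ε * Q) := by
      rw [log_mul (by positivity) hQ.ne', log_rpow (by positivity)]
    _ ≤ log P := log_le_log (by positivity) hPQ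
  rw [← mul_div_assoc]
  exact div_le_div_of_nonpos_of_le (log_neg hr0 hr1).le hP

lemma tendsto_log_div_const_div_log {c : ℝ} (hc : c ≠ 0) :
    Tendsto (fun r => log (r / c) / log r) (𝓝[>] 0) (𝓝 1) := by
  have h := (tendsto_const_nhds (x := (1 : ℝ))).sub
    (tendsto_log_nhdsGT_zero.const_div_atBot (log c))
  rw [sub_zero] at h
  refine h.congr' ?_
  filter_upwards [Ioo_mem_nhdsGT one_pos] with r ⟨hr0, hr1⟩
  rw [log_div hr0.ne' hc, sub_div, div_self (log_neg hr0 hr1).ne]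

end Real

section

variable {X : Type*} [MetricSpace X] [MeasurableSpace X]

lemma upperLocalDim_eq_of_le {ρ ν : Measure X} [IsFiniteMeasure ν] {x : X} (hle : ρ ≤ ν)
    (hpos : ∀ r > 0, 0 < ρ (closedBall x r))
    (hdens : ∀ ε : ℝ, 0 < ε → ∀ᶠ r in 𝓝[>] 0,
      ENNReal.ofReal ((r / 4) ^ ε) * ν (closedBall x (r / 4)) ≤ ρ (closedBall x r)) :
    upperLocalDim ν x = upperLocalDim ρ x := by
  have : IsFiniteMeasure ρ := isFiniteMeasure_of_le ν hle
  have hρ (r : ℝ) (hr : 0 < r) : 0 < (ρ (closedBall x r)).toReal :=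
    ENNReal.toReal_pos (hpos r hr).ne' (measure_ne_top _ _)
  have hν (r : ℝ) (hr : 0 < r) : 0 < (ν (closedBall x r)).toReal :=
    (hρ r hr).trans_le (ENNReal.toReal_mono (measure_ne_top _ _) (hle _))
  have h01 : Ioo (0 : ℝ) 1 ∈ 𝓝[>] 0 := Ioo_mem_nhdsGT one_pos
  refine Real.limsup_eq_limsup_of_eventually_le ?_ fun a b hab ha => ?_
  · filter_upwards [h01] with r ⟨hr0, hr1⟩
    exact div_le_div_of_nonpos_of_le (Real.log_neg hr0 hr1).le
      (Real.log_le_log (hρ r hr0) (ENNReal.toReal_mono (measure_ne_top _ _) (hle _)))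
  set ε := (b - a) / 2
  have hquarter : Tendsto (fun r : ℝ => r / 4) (𝓝[>] 0) (𝓝[>] 0) :=
    tendsto_nhdsWithin_iff.2 ⟨((continuous_id.div_const 4).tendsto' 0 0 (by simp)).mono_left
      nhdsWithin_le_nhds, eventually_nhdsWithin_of_forall fun r (hr : 0 < r) => div_pos hr four_pos⟩
  have hlim : ∀ᶠ r in 𝓝[>] 0, (a + ε) * (Real.log (r / 4) / Real.log r) < b :=
    ((Real.tendsto_log_div_const_div_log four_ne_zero).const_mul (a + ε)).eventually_lt_const
      (by simp only [ε]; linarith)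
  filter_upwards [h01, hquarter.eventually ha, hdens ε (by simp only [ε]; linarith), hlim]
    with r ⟨hr0, hr1⟩ hνa hr hb
  refine (Real.log_div_log_le_of_rpow_mul_le hr0 hr1 (hν _ (by positivity)) hνa ?_).trans hb.le
  have := ENNReal.toReal_mono (measure_ne_top _ _) hr
  rwa [ENNReal.toReal_mul, ENNReal.toReal_ofReal (by positivity)] at this

end

section

variable {X : Type*} [MetricSpace X] [SecondCountableTopology X] [MeasurableSpace X]
  [BorelSpace X]

lemma measurable_measure_closedBall (ρ : Measure X) [SFinite ρ] (r : ℝ) :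
    Measurable fun x => ρ (closedBall x r) :=
  measurable_measure_prodMk_left (s := {p : X × X | dist p.2 p.1 ≤ r})
    (isClosed_le (by fun_prop) continuous_const).measurableSet

lemma lintegral_measure_closedBall_div_le (ρ ν : Measure X) [SFinite ρ] [SFinite ν] (r : ℝ) :
    ∫⁻ x, ν (closedBall x r) / ρ (closedBall x (2 * r)) ∂ρ ≤ ν univ := by
  have hmeas : Measurable fun p : X × X =>
      (ρ (closedBall p.1 (2 * r)))⁻¹ * (closedBall p.1 r).indicator 1 p.2 :=
    ((measurable_measure_closedBall ρ _).comp measurable_fst).inv.mul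
      (measurable_const.indicator (isClosed_le (by fun_prop) continuous_const).measurableSet)
  calc ∫⁻ x, ν (closedBall x r) / ρ (closedBall x (2 * r)) ∂ρ
      = ∫⁻ x, ∫⁻ y, (ρ (closedBall x (2 * r)))⁻¹ * (closedBall x r).indicator 1 y ∂ν ∂ρ := by
        refine lintegral_congr fun x => ?_
        rw [lintegral_const_mul _ (measurable_one.indicator measurableSet_closedBall),
          lintegral_indicator_one measurableSet_closedBall, div_eq_mul_inv, mul_comm]
    _ = ∫⁻ y, ∫⁻ x in closedBall y r, (ρ (closedBall x (2 * r)))⁻¹ ∂ρ ∂ν := by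
        rw [lintegral_lintegral_swap hmeas.aemeasurable]
        refine lintegral_congr fun y => ?_
        rw [← lintegral_indicator measurableSet_closedBall]
        refine lintegral_congr fun x => ?_
        simp [indicator, mem_closedBall, dist_comm]
    _ ≤ ∫⁻ y, 1 ∂ν := lintegral_mono fun y => ?_
    _ = ν univ := by simp
  calc ∫⁻ x in closedBall y r, (ρ (closedBall x (2 * r)))⁻¹ ∂ρ
      ≤ ∫⁻ x in closedBall y r, (ρ (closedBall y r))⁻¹ ∂ρ := by
        refine setLIntegral_mono' measurableSet_closedBall fun x hx => ENNReal.inv_le_inv.2 ?_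
        rw [mem_closedBall, dist_comm] at hx
        exact measure_mono (closedBall_subset_closedBall' (by linarith))
    _ = (ρ (closedBall y r))⁻¹ * ρ (closedBall y r) := setLIntegral_const _ _
    _ ≤ 1 := ENNReal.inv_mul_le_one _

lemma measure_setOf_measure_closedBall_lt_le (ρ ν : Measure X) [SFinite ρ] [IsFiniteMeasure ν]
    (r : ℝ) {c : ℝ≥0∞} (hc0 : c ≠ 0) (hc : c ≠ ∞) :
    ρ {x | ρ (closedBall x (2 * r)) < c * ν (closedBall x r)} ≤ c * ν univ := by
  set f := fun x => ν (closedBall x r) / ρ (closedBall x (2 * r))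
  have hsub : {x | ρ (closedBall x (2 * r)) < c * ν (closedBall x r)} ⊆ {x | c⁻¹ ≤ f x} := by
    intro x hx
    have hν : ν (closedBall x r) ≠ 0 := fun h => by simp [h] at hx
    refine (ENNReal.le_div_iff_mul_le (Or.inr hν) (Or.inr (measure_ne_top _ _))).2 ?_
    calc c⁻¹ * ρ (closedBall x (2 * r)) ≤ c⁻¹ * (c * ν (closedBall x r)) := by gcongr; exact hx.le
      _ = ν (closedBall x r) := by rw [← mul_assoc, ENNReal.inv_mul_cancel hc0 hc, one_mul]
  have hmarkov : c⁻¹ * ρ {x | c⁻¹ ≤ f x} ≤ ν univ :=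
    (mul_meas_ge_le_lintegral₀ ((measurable_measure_closedBall ν r).div
      (measurable_measure_closedBall ρ _)).aemeasurable _).trans
      (lintegral_measure_closedBall_div_le ρ ν r)
  calc ρ {x | ρ (closedBall x (2 * r)) < c * ν (closedBall x r)} ≤ ρ {x | c⁻¹ ≤ f x} :=
        measure_mono hsub
    _ ≤ c * ν univ := by
        rwa [ENNReal.mul_le_iff_le_inv (ENNReal.inv_ne_zero.2 hc) (ENNReal.inv_ne_top.2 hc0),
          inv_inv] at hmarkov

lemma ae_eventually_rpow_mul_measure_closedBall_le (ρ ν : Measure X) [IsFiniteMeasure ρ]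
    [IsFiniteMeasure ν] {ε : ℝ} (hε : 0 < ε) :
    ∀ᵐ x ∂ρ, ∀ᶠ k : ℕ in atTop, ENNReal.ofReal (((2 : ℝ)⁻¹ ^ k) ^ ε) *
      ν (closedBall x (2⁻¹ ^ k)) ≤ ρ (closedBall x (2 * 2⁻¹ ^ k)) := by
  have hq : ENNReal.ofReal ((2 : ℝ)⁻¹ ^ ε) < 1 :=
    ENNReal.ofReal_lt_one.2 (Real.rpow_lt_one (by norm_num) (by norm_num) hε)
  have hpow (k : ℕ) : ENNReal.ofReal (((2 : ℝ)⁻¹ ^ k) ^ ε) = ENNReal.ofReal (2⁻¹ ^ ε) ^ k := by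
    rw [← Real.rpow_pow_comm (by norm_num), ENNReal.ofReal_pow (by positivity)]
  have hsum : ∑' k : ℕ, ρ {x | ρ (closedBall x (2 * 2⁻¹ ^ k)) <
      ENNReal.ofReal (((2 : ℝ)⁻¹ ^ k) ^ ε) * ν (closedBall x (2⁻¹ ^ k))} ≠ ∞ := by
    refine ne_top_of_le_ne_top
      (ENNReal.mul_ne_top (tsum_geometric_lt_top.2 hq).ne (measure_ne_top ν univ)) ?_
    rw [← ENNReal.tsum_mul_right]
    refine ENNReal.tsum_le_tsum fun k => ?_
    rw [← hpow]
    exact measure_setOf_measure_closedBall_lt_le ρ ν _ (by positivity) ENNReal.ofReal_ne_top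
  filter_upwards [ae_eventually_notMem hsum] with x hx
  simpa using hx

lemma ae_eventually_rpow_mul_measure_closedBall_div_four_le (ρ ν : Measure X)
    [IsFiniteMeasure ρ] [IsFiniteMeasure ν] {ε : ℝ} (hε : 0 < ε) :
    ∀ᵐ x ∂ρ, ∀ᶠ r in 𝓝[>] 0,
      ENNReal.ofReal ((r / 4) ^ ε) * ν (closedBall x (r / 4)) ≤ ρ (closedBall x r) := by
  filter_upwards [ae_eventually_rpow_mul_measure_closedBall_le ρ ν hε] with x hx
  obtain ⟨k₀, hk₀⟩ := eventually_atTop.1 hx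
  filter_upwards [Ioo_mem_nhdsGT (show (0 : ℝ) < 2⁻¹ ^ k₀ by positivity)] with r ⟨hr0, hrk₀⟩
  have hr1 : r ≤ 1 := hrk₀.le.trans (pow_le_one₀ (by norm_num) (by norm_num))
  obtain ⟨n, hn, hn'⟩ := exists_nat_pow_near_of_lt_one (x := r / 2) (y := (2 : ℝ)⁻¹)
    (by positivity) (by linarith) (by norm_num) (by norm_num)
  have hk : k₀ ≤ n + 1 := by
    refine ((pow_lt_pow_iff_right_of_lt_one₀ (by norm_num) (by norm_num : (2 : ℝ)⁻¹ < 1)).1 ?_).le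
    linarith
  have hs : r / 4 ≤ 2⁻¹ ^ (n + 1) := by rw [pow_succ]; linarith
  calc ENNReal.ofReal ((r / 4) ^ ε) * ν (closedBall x (r / 4))
      ≤ ENNReal.ofReal (((2 : ℝ)⁻¹ ^ (n + 1)) ^ ε) * ν (closedBall x (2⁻¹ ^ (n + 1))) := by
        gcongr
    _ ≤ ρ (closedBall x (2 * 2⁻¹ ^ (n + 1))) := hk₀ _ hk
    _ ≤ ρ (closedBall x r) := measure_mono (closedBall_subset_closedBall (by linarith))

lemma ae_forall_eventually_rpow_mul_measure_closedBall_div_four_le (ρ ν : Measure X)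
    [IsFiniteMeasure ρ] [IsFiniteMeasure ν] :
    ∀ᵐ x ∂ρ, ∀ ε : ℝ, 0 < ε → ∀ᶠ r in 𝓝[>] 0,
      ENNReal.ofReal ((r / 4) ^ ε) * ν (closedBall x (r / 4)) ≤ ρ (closedBall x r) := by
  have h := ae_all_iff.2 fun n : ℕ =>
    ae_eventually_rpow_mul_measure_closedBall_div_four_le ρ ν (Nat.one_div_pos_of_nat (n := n))
  filter_upwards [h] with x hx ε hε
  obtain ⟨n, hn⟩ := exists_nat_one_div_lt hε
  filter_upwards [hx n, Ioo_mem_nhdsGT (show (0 : ℝ) < 4 by norm_num)] with r hr ⟨hr0, hr4⟩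
  refine le_trans (mul_le_mul_left (ENNReal.ofReal_le_ofReal ?_) _) hr
  exact Real.rpow_le_rpow_of_exponent_ge (by positivity) (by linarith) hn.le

lemma ae_upperLocalDim_eq_of_le (ρ ν : Measure X) [IsFiniteMeasure ν] (hle : ρ ≤ ν) :
    ∀ᵐ x ∂ρ, upperLocalDim ν x = upperLocalDim ρ x := by
  have : IsFiniteMeasure ρ := isFiniteMeasure_of_le ν hle
  filter_upwards [ae_forall_eventually_rpow_mul_measure_closedBall_div_four_le ρ ν,
    Measure.support_mem_ae] with x hdens hx
  exact upperLocalDim_eq_of_le hle (fun r hr =>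
    (Measure.mem_support_iff_forall x).1 hx _ (closedBall_mem_nhds x hr)) hdens

end

theorem upperLocalDim_map_restrict_general {X Y : Type*}
    [MetricSpace X] [SecondCountableTopology X]
    [MeasurableSpace X] [BorelSpace X]
    [MetricSpace Y]
    [MeasurableSpace Y] [BorelSpace Y]
    (f : Y → X) (hf : Continuous f)
    (μ : Measure Y) [IsLocallyFiniteMeasure μ]
    (K : Set Y) (hK : IsCompact K) (hKfull : μ Kᶜ = 0)
    (A : Set Y) :
    ∀ᵐ y ∂μ.restrict A,
      upperLocalDim (μ.map f) (f y) = upperLocalDim ((μ.restrict A).map f) (f y) := by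
  have : IsFiniteMeasure μ := ⟨(measure_univ_le_add_compl K).trans_lt
    (by rw [hKfull, add_zero]; exact hK.measure_lt_top)⟩
  exact ae_of_ae_map hf.aemeasurable (ae_upperLocalDim_eq_of_le _ _
    (Measure.map_mono Measure.restrict_le_self hf.measurable))

theorem upperLocalDim_map_restrict {X Y : Type*}
    [MetricSpace X] [CompleteSpace X] [SecondCountableTopology X]
    [MeasurableSpace X] [BorelSpace X]
    [MetricSpace Y] [CompleteSpace Y] [SecondCountableTopology Y]
    [MeasurableSpace Y] [BorelSpace Y]
    (f : Y → X) (hf : Continuous f)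
    (μ : Measure Y) [IsLocallyFiniteMeasure μ]
    (K : Set Y) (hK : IsCompact K) (hKfull : μ Kᶜ = 0)
    (A : Set Y) (hA : 0 < μ A) :
    ∀ᵐ y ∂μ.restrict A,
      upperLocalDim (μ.map f) (f y) = upperLocalDim ((μ.restrict A).map f) (f y) :=
  upperLocalDim_map_restrict_general f hf μ K hK hKfull A
end
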